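/- arXiv:2406.17612 — 4 statements merged into one kernel-verified Lean document; each statement's English description precedes it below -/
import Mathlib

section
/- Approximate right inverse without analyticity (Theorem 7.1/Theorem 2.8-type). Suppose that for every z ∈ 𝒳 there is a Borel set 𝒦^z ⊆ 𝒦 with ℓ(𝒦^z) = 1 such that for every η ∈ 𝒦^z the image of 𝔸(z,η) is dense in 𝒯. Then for every ε = (ε₁, ε₂) ∈ (0,1)² there exist: a continuous function 𝔉: 𝒳 × E → [0,∞) such that η ↦ 𝔉(z,η) is real-analytic for every z ∈ 𝒳; an integer M ≥ 1; and constants ν > 0, C > 0; with the following properties: (i) ℓ({η ∈ 𝒦 : 𝔉(z,η) ≤ ν}) ≥ 1 − ε₁ for every z ∈ 𝒳; (ii) letting 𝒟 := {(z,η) ∈ 𝒳 × 𝒦 : 𝔉(z,η) ≤ 2ν} (a compact set), there is a continuous map R: 𝒟 → ℒ(𝒯, F) such that for all (z,η) ∈ 𝒟: the image of R(z,η) is contained in F_M, ‖R(z,η)‖_{ℒ(𝒯,F)} ≤ C, and ‖𝔸(z,η) R(z,η) f − f‖_𝒯 ≤ ε₂ ‖f‖_𝒱 for every f ∈ 𝒱.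 -/
open MeasureTheory Set Metric ContinuousLinearMap
open scoped ENNReal NNReal

section GG
variable {F T : Type*} [NormedAddCommGroup F] [InnerProductSpace ℝ F]
  [NormedAddCommGroup T] [InnerProductSpace ℝ T]

/-- worst-case distance of points of `S` to the image of `B` under `Λ`. -/
noncomputable def GGdef (S : Set T) (B : Set F) (Λ : F →L[ℝ] T) : ℝ :=
  sSup ((fun t => infDist t (Λ '' B)) '' S)

variable {S : Set T} {B B' : Set F} {Λ Λ' : F →L[ℝ] T}

lemma GG_bddAbove (hS : IsCompact S) :
    BddAbove ((fun t => infDist t (Λ '' B)) '' S) :=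
  (hS.image (continuous_infDist_pt _)).bddAbove

lemma le_GG (hS : IsCompact S) {t : T} (ht : t ∈ S) :
    infDist t (Λ '' B) ≤ GGdef S B Λ :=
  le_csSup (GG_bddAbove hS) (Set.mem_image_of_mem _ ht)

lemma GG_le (hS : S.Nonempty) {c : ℝ} (h : ∀ t ∈ S, infDist t (Λ '' B) ≤ c) :
    GGdef S B Λ ≤ c :=
  csSup_le (hS.image _) (by rintro x ⟨t, ht, rfl⟩; exact h t ht)

lemma GG_nonneg (hS : IsCompact S) (h0 : (0:T) ∈ S) : 0 ≤ GGdef S B Λ :=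
  le_trans infDist_nonneg (le_GG hS h0)

lemma GG_anti (hS : IsCompact S) (hSne : S.Nonempty) (hB : B.Nonempty) (hBB : B ⊆ B') :
    GGdef S B' Λ ≤ GGdef S B Λ := by
  refine GG_le hSne fun t ht => le_trans ?_ (le_GG hS ht)
  exact infDist_le_infDist_of_subset (Set.image_mono hBB) (hB.image _)

lemma infDist_lip (hBne : B.Nonempty) {r : ℝ}
    (hBr : ∀ g ∈ B, ‖g‖ ≤ r) (t : T) :
    infDist t (Λ '' B) ≤ infDist t (Λ' '' B) + r * ‖Λ - Λ'‖ := by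
  have hne : (Λ' '' B).Nonempty := hBne.image _
  refine le_of_forall_pos_le_add fun σ hσ => ?_
  obtain ⟨y, ⟨g, hg, rfl⟩, hy⟩ := (infDist_lt_iff hne).1
    (lt_add_of_le_of_pos le_rfl hσ)
  have h2 : infDist t (Λ '' B) ≤ dist t (Λ g) :=
    infDist_le_dist_of_mem (Set.mem_image_of_mem _ hg)
  have h3 : dist t (Λ g) ≤ dist t (Λ' g) + ‖Λ - Λ'‖ * ‖g‖ := by
    have h5 := (Λ - Λ').le_opNorm g
    simp only [ContinuousLinearMap.sub_apply] at h5
    calc dist t (Λ g) ≤ dist t (Λ' g) + dist (Λ' g) (Λ g) := dist_triangle _ _ _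
      _ ≤ dist t (Λ' g) + ‖Λ - Λ'‖ * ‖g‖ := by
          have : dist (Λ' g) (Λ g) = ‖Λ g - Λ' g‖ := by rw [dist_comm, dist_eq_norm]
          rw [this]; linarith
  have h4 : ‖Λ - Λ'‖ * ‖g‖ ≤ r * ‖Λ - Λ'‖ := by
    rw [mul_comm]
    exact mul_le_mul (hBr g hg) le_rfl (norm_nonneg _)
      (le_trans (norm_nonneg _) (hBr g hg))
  linarith

lemma GG_lip_one_sided (hS : IsCompact S) (hSne : S.Nonempty) (hBne : B.Nonempty) {r : ℝ}
    (hBr : ∀ g ∈ B, ‖g‖ ≤ r) :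
    GGdef S B Λ ≤ GGdef S B Λ' + r * ‖Λ - Λ'‖ := by
  refine GG_le hSne fun t ht => ?_
  have h1 := infDist_lip (Λ := Λ) (Λ' := Λ') hBne hBr t
  have h2 := le_GG (Λ := Λ') (B := B) hS ht
  linarith

lemma GG_continuous (hS : IsCompact S) (hSne : S.Nonempty) (hBne : B.Nonempty) {r : ℝ}
    (hBr : ∀ g ∈ B, ‖g‖ ≤ r) :
    Continuous (GGdef S B : (F →L[ℝ] T) → ℝ) := by
  have key : ∀ Λ Λ' : F →L[ℝ] T, GGdef S B Λ ≤ GGdef S B Λ' + r * ‖Λ - Λ'‖ :=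
    fun Λ Λ' => GG_lip_one_sided hS hSne hBne hBr
  have hr : 0 ≤ r := hBne.elim fun g hg => le_trans (norm_nonneg _) (hBr g hg)
  have : LipschitzWith (Real.toNNReal r) (GGdef S B : (F →L[ℝ] T) → ℝ) := by
    refine LipschitzWith.of_dist_le_mul fun Λ Λ' => ?_
    have k1 := key Λ Λ'
    have k2 := key Λ' Λ
    rw [norm_sub_rev] at k2
    rw [Real.dist_eq, Real.coe_toNNReal r hr, dist_eq_norm]
    rw [abs_le]; constructor <;> nlinarith [norm_nonneg (Λ - Λ')]
  exact this.continuous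
end GG

section Tikhonov
variable {G T : Type*} [NormedAddCommGroup G] [InnerProductSpace ℝ G] [CompleteSpace G]
  [NormedAddCommGroup T] [InnerProductSpace ℝ T] [CompleteSpace T]

noncomputable def Bopdef (Λ : G →L[ℝ] T) (δ : ℝ) : G →L[ℝ] G :=
  (ContinuousLinearMap.adjoint Λ) ∘L Λ + δ • ContinuousLinearMap.id ℝ G

lemma Bop_inner (Λ : G →L[ℝ] T) (δ : ℝ) (u v : G) :
    inner ℝ (Bopdef Λ δ u) v = inner ℝ (Λ u) (Λ v) + δ * (inner ℝ u v : ℝ) := by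
  simp only [Bopdef, ContinuousLinearMap.add_apply, ContinuousLinearMap.comp_apply,
    ContinuousLinearMap.smul_apply, ContinuousLinearMap.id_apply, inner_add_left,
    inner_smul_left, RCLike.conj_to_real]
  rw [ContinuousLinearMap.adjoint_inner_left]

lemma Bop_injective [FiniteDimensional ℝ G] (Λ : G →L[ℝ] T) {δ : ℝ} (hδ : 0 < δ) :
    Function.Injective (Bopdef Λ δ) := by
  intro u v huv
  have h : Bopdef Λ δ (u - v) = 0 := by rw [map_sub, huv, sub_self]
  have h2 : (0:ℝ) = ‖Λ (u-v)‖^2 + δ * ‖u-v‖^2 := by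
    have := Bop_inner Λ δ (u-v) (u-v)
    rw [h] at this
    simp only [inner_zero_left] at this
    rw [real_inner_self_eq_norm_sq, real_inner_self_eq_norm_sq] at this
    linarith
  have h3 : ‖u - v‖^2 = 0 := by nlinarith [norm_nonneg (Λ (u-v)), norm_nonneg (u-v), sq_nonneg ‖Λ (u-v)‖, sq_nonneg ‖u-v‖]
  have : u - v = 0 := by
    have := pow_eq_zero_iff (n := 2) (by norm_num) |>.1 h3
    exact norm_eq_zero.1 this
  exact sub_eq_zero.1 this

lemma Bop_isUnit [FiniteDimensional ℝ G] (Λ : G →L[ℝ] T) {δ : ℝ} (hδ : 0 < δ) :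
    IsUnit (Bopdef Λ δ) := by
  have hinj := Bop_injective Λ hδ
  have hbij : Function.Bijective (Bopdef Λ δ) :=
    ⟨hinj, (LinearMap.injective_iff_surjective).1 hinj⟩
  let e : G ≃ₗ[ℝ] G := LinearEquiv.ofBijective (Bopdef Λ δ : G →ₗ[ℝ] G) hbij
  let e' : G ≃L[ℝ] G := e.toContinuousLinearEquiv
  refine ⟨⟨Bopdef Λ δ, (e'.symm : G →L[ℝ] G), ?_, ?_⟩, rfl⟩
  · ext x
    change Bopdef Λ δ (e'.symm x) = x
    exact e'.apply_symm_apply x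
  · ext x
    change e'.symm (Bopdef Λ δ x) = x
    exact e'.symm_apply_apply x

noncomputable def Ropdef (Λ : G →L[ℝ] T) (δ : ℝ) : T →L[ℝ] G :=
  (Ring.inverse (Bopdef Λ δ)) ∘L (ContinuousLinearMap.adjoint Λ)

lemma Bop_Rop [FiniteDimensional ℝ G] (Λ : G →L[ℝ] T) {δ : ℝ} (hδ : 0 < δ) (t : T) :
    Bopdef Λ δ (Ropdef Λ δ t) = ContinuousLinearMap.adjoint Λ t := by
  have h := Ring.mul_inverse_cancel _ (Bop_isUnit Λ hδ)
  have h2 : (Bopdef Λ δ * Ring.inverse (Bopdef Λ δ)) (ContinuousLinearMap.adjoint Λ t)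
      = (1 : G →L[ℝ] G) (ContinuousLinearMap.adjoint Λ t) := by rw [h]
  simpa [Ropdef, ContinuousLinearMap.mul_apply] using h2

lemma tikhonov_min [FiniteDimensional ℝ G] (Λ : G →L[ℝ] T) {δ : ℝ} (hδ : 0 < δ) (t : T)
    (g : G) :
    ‖Λ (Ropdef Λ δ t) - t‖^2 + δ * ‖Ropdef Λ δ t‖^2 ≤ ‖Λ g - t‖^2 + δ * ‖g‖^2 := by
  set g₀ := Ropdef Λ δ t with hg₀
  set h := g - g₀ with hh
  have hg : g = g₀ + h := by rw [hh]; abel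
  have e1 : Λ g - t = (Λ g₀ - t) + Λ h := by rw [hg, map_add]; abel
  have e2 : ‖Λ g - t‖^2 = ‖Λ g₀ - t‖^2 + 2 * inner ℝ (Λ g₀ - t) (Λ h) + ‖Λ h‖^2 := by
    rw [e1]; exact norm_add_sq_real _ _
  have e3 : ‖g‖^2 = ‖g₀‖^2 + 2 * inner ℝ g₀ h + ‖h‖^2 := by
    rw [hg]; exact norm_add_sq_real _ _
  have cross : (inner ℝ (Λ g₀ - t) (Λ h) : ℝ) + δ * inner ℝ g₀ h = 0 := by
    have a1 : (inner ℝ (Λ g₀ - t) (Λ h) : ℝ)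
        = inner ℝ (ContinuousLinearMap.adjoint Λ (Λ g₀ - t)) h := by
      rw [ContinuousLinearMap.adjoint_inner_left]
    have a2 : (inner ℝ (Λ g₀ - t) (Λ h) : ℝ) + δ * inner ℝ g₀ h
        = inner ℝ (ContinuousLinearMap.adjoint Λ (Λ g₀ - t) + δ • g₀) h := by
      rw [a1, inner_add_left, real_inner_smul_left]
    rw [a2]
    have a3 : ContinuousLinearMap.adjoint Λ (Λ g₀ - t) + δ • g₀
        = Bopdef Λ δ g₀ - ContinuousLinearMap.adjoint Λ t := by
      simp only [map_sub, Bopdef, ContinuousLinearMap.add_apply,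
        ContinuousLinearMap.comp_apply, ContinuousLinearMap.smul_apply,
        ContinuousLinearMap.id_apply]
      abel
    rw [a3, hg₀, Bop_Rop Λ hδ t]
    simp
  nlinarith [sq_nonneg ‖Λ h‖, sq_nonneg ‖h‖, cross, e2, e3]

lemma Rop_continuous [FiniteDimensional ℝ G] {δ : ℝ} (hδ : 0 < δ) :
    Continuous (fun Λ : G →L[ℝ] T => Ropdef Λ δ) := by
  have hadj : Continuous (fun Λ : G →L[ℝ] T => (ContinuousLinearMap.adjoint Λ : T →L[ℝ] G)) :=
    (ContinuousLinearMap.adjoint : (G →L[ℝ] T) ≃ₗᵢ⋆[ℝ] (T →L[ℝ] G)).continuous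
  have hB : Continuous (fun Λ : G →L[ℝ] T => Bopdef Λ δ) := by
    apply Continuous.add
    · exact hadj.clm_comp continuous_id
    · exact continuous_const
  have hinv : Continuous (fun Λ : G →L[ℝ] T => Ring.inverse (Bopdef Λ δ)) := by
    rw [continuous_iff_continuousAt]
    intro Λ
    have h1 : ContinuousAt (Ring.inverse : (G →L[ℝ] G) → (G →L[ℝ] G)) (Bopdef Λ δ) :=
      NormedRing.inverse_continuousAt (Bop_isUnit Λ hδ).unit
    exact ContinuousAt.comp (f := fun Λ' : G →L[ℝ] T => Bopdef Λ' δ) (x := Λ) h1 hB.continuousAt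
  exact hinv.clm_comp hadj

end Tikhonov

section SW
variable {X E : Type*} [MetricSpace X] [NormedAddCommGroup E] [InnerProductSpace ℝ E]

lemma analytic_approx (Q : Set (X × E)) (hQ : IsCompact Q) (φ : X × E → ℝ)
    (hφ : Continuous φ) (δ : ℝ) (hδ : 0 < δ) :
    ∃ h : X × E → ℝ, Continuous h ∧ (∀ z η, AnalyticAt ℝ (fun η' => h (z, η')) η) ∧
      ∀ q ∈ Q, |h q - φ q| < δ := by
  haveI : CompactSpace Q := isCompact_iff_compactSpace.1 hQ
  classical
  let good : Set C(Q, ℝ) := {f | ∃ g : X × E → ℝ, Continuous g ∧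
    (∀ z η, AnalyticAt ℝ (fun η' => g (z, η')) η) ∧ ∀ q : Q, g q = f q}
  let A₀ : Subalgebra ℝ C(Q, ℝ) :=
    { carrier := good
      mul_mem' := by
        rintro f₁ f₂ ⟨g₁, hc₁, ha₁, he₁⟩ ⟨g₂, hc₂, ha₂, he₂⟩
        exact ⟨g₁ * g₂, hc₁.mul hc₂, fun z η => (ha₁ z η).mul (ha₂ z η),
          fun q => by simp [he₁ q, he₂ q]⟩
      add_mem' := by
        rintro f₁ f₂ ⟨g₁, hc₁, ha₁, he₁⟩ ⟨g₂, hc₂, ha₂, he₂⟩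
        exact ⟨g₁ + g₂, hc₁.add hc₂, fun z η => (ha₁ z η).add (ha₂ z η),
          fun q => by simp [he₁ q, he₂ q]⟩
      algebraMap_mem' := fun r =>
        ⟨fun _ => r, continuous_const, fun z η => analyticAt_const, fun q => rfl⟩ }
  have hsep : A₀.SeparatesPoints := by
    rintro ⟨⟨x₁, η₁⟩, hq₁⟩ ⟨⟨x₂, η₂⟩, hq₂⟩ hne
    by_cases hx : x₁ = x₂
    · have hη : η₁ ≠ η₂ := by
        intro h; apply hne; apply Subtype.ext; simp [hx, h]
      refine ⟨_, ⟨⟨fun q => (inner ℝ (q : X × E).2 (η₁ - η₂) : ℝ), by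
        exact Continuous.inner (continuous_snd.comp continuous_subtype_val) continuous_const⟩,
        ⟨fun q => (inner ℝ (q : X × E).2 (η₁ - η₂) : ℝ), ?_, ?_, fun q => rfl⟩, rfl⟩, ?_⟩
      · exact Continuous.inner continuous_snd continuous_const
      · intro z η
        exact ((innerSL ℝ).flip (η₁ - η₂)).analyticAt η
      · simp only [ContinuousMap.coe_mk]
        intro h
        have : (inner ℝ (η₁ - η₂) (η₁ - η₂) : ℝ) = 0 := by
          simp only [inner_sub_left] at h ⊢
          linarith
        exact hη (sub_eq_zero.1 ((inner_self_eq_zero (𝕜 := ℝ)).1 this))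
    · refine ⟨_, ⟨⟨fun q => dist (q : X × E).1 x₁, by
        exact (continuous_fst.comp continuous_subtype_val).dist continuous_const⟩,
        ⟨fun p => dist p.1 x₁, by exact continuous_fst.dist continuous_const,
          fun z η => (analyticAt_const : AnalyticAt ℝ (fun _ : E => dist z x₁) η), fun q => rfl⟩, rfl⟩, ?_⟩
      simp only [ContinuousMap.coe_mk]
      rw [dist_self]
      intro h
      exact hx (dist_eq_zero.1 h.symm).symm
  obtain ⟨⟨g, hg⟩, hgood⟩ := ContinuousMap.exists_mem_subalgebra_near_continuous_of_separatesPoints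
    A₀ hsep (fun q : Q => φ q) (hφ.comp continuous_subtype_val) δ hδ
  obtain ⟨h, hc, ha, he⟩ := hg
  refine ⟨h, hc, ha, fun q hq => ?_⟩
  have := hgood ⟨q, hq⟩
  rw [← he ⟨q, hq⟩] at this
  simpa [Real.norm_eq_abs] using this

end SW

section Pointwise
variable {F T : Type*} [NormedAddCommGroup F] [InnerProductSpace ℝ F] [CompleteSpace F]
  [NormedAddCommGroup T] [InnerProductSpace ℝ T] [CompleteSpace T]

/-- `F_M` -/
def FMset (ψ : HilbertBasis ℕ ℝ F) (M : ℕ) : Submodule ℝ F :=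
  Submodule.span ℝ (Set.range fun j : Fin M => ψ (j : ℕ))

/-- the ball of radius `M` in `F_M` -/
def BMset (ψ : HilbertBasis ℕ ℝ F) (M : ℕ) : Set F :=
  {g : F | g ∈ FMset ψ M ∧ ‖g‖ ≤ M}

lemma BMset_zero_mem (ψ : HilbertBasis ℕ ℝ F) (M : ℕ) : (0:F) ∈ BMset ψ M :=
  ⟨Submodule.zero_mem _, by simp⟩

lemma BMset_mono (ψ : HilbertBasis ℕ ℝ F) {M M' : ℕ} (h : M ≤ M') :
    BMset ψ M ⊆ BMset ψ M' := by
  rintro g ⟨hg, hn⟩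
  refine ⟨Submodule.span_mono ?_ hg, le_trans hn (by exact_mod_cast h)⟩
  rintro x ⟨j, rfl⟩
  exact ⟨⟨(j:ℕ), lt_of_lt_of_le j.2 h⟩, rfl⟩

lemma FMset_mono (ψ : HilbertBasis ℕ ℝ F) {M M' : ℕ} (h : M ≤ M') :
    FMset ψ M ≤ FMset ψ M' := by
  apply Submodule.span_mono
  rintro x ⟨j, rfl⟩
  exact ⟨⟨(j:ℕ), lt_of_lt_of_le j.2 h⟩, rfl⟩

lemma partial_sum_mem (ψ : HilbertBasis ℕ ℝ F) (u : F) (N : ℕ) :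
    (∑ i ∈ Finset.range N, ψ.repr u i • ψ i) ∈ FMset ψ N := by
  refine Submodule.sum_mem _ fun i hi => Submodule.smul_mem _ _ (Submodule.subset_span ?_)
  exact ⟨⟨i, Finset.mem_range.1 hi⟩, rfl⟩

lemma exists_partial_sum_close (ψ : HilbertBasis ℕ ℝ F) (u : F) {σ : ℝ} (hσ : 0 < σ) :
    ∃ N : ℕ, ∃ g ∈ FMset ψ N, ‖g - u‖ < σ := by
  have hs := (ψ.hasSum_repr u).tendsto_sum_nat
  obtain ⟨N, hN⟩ := (Metric.tendsto_atTop.1 hs) σ hσ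
  exact ⟨N, _, partial_sum_mem ψ u N, by
    have := hN N le_rfl; rwa [dist_eq_norm] at this⟩

lemma pointwise_small (ψ : HilbertBasis ℕ ℝ F) {S : Set T} (hS : IsCompact S)
    (hSne : S.Nonempty) (Λ : F →L[ℝ] T) (hd : Dense (Set.range Λ)) {τ : ℝ} (hτ : 0 < τ) :
    ∃ M : ℕ, GGdef S (BMset ψ M) Λ ≤ τ := by
  classical
  -- finite τ/4-net of S
  obtain ⟨t, htfin, htcov⟩ := (Metric.totallyBounded_iff.1 hS.totallyBounded) (τ/4)
    (by linarith)
  -- for every y, a good approximant in some F_m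
  have hy : ∀ y : T, ∃ gm : F × ℕ, gm.1 ∈ FMset ψ gm.2 ∧ ‖Λ gm.1 - y‖ ≤ τ/2 := by
    intro y
    have : y ∈ closure (Set.range Λ) := hd y
    obtain ⟨w, ⟨u, rfl⟩, hw⟩ := Metric.mem_closure_iff.1 this (τ/4) (by linarith)
    obtain ⟨N, g, hgmem, hgu⟩ := exists_partial_sum_close ψ u
      (σ := τ/(4*(‖Λ‖+1))) (by positivity)
    refine ⟨(g, N), hgmem, ?_⟩
    have h1 : ‖Λ g - Λ u‖ ≤ ‖Λ‖ * ‖g - u‖ := by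
      rw [← map_sub]; exact Λ.le_opNorm _
    have h2 : ‖Λ‖ * ‖g - u‖ ≤ ‖Λ‖ * (τ/(4*(‖Λ‖+1))) :=
      mul_le_mul_of_nonneg_left (le_of_lt hgu) (norm_nonneg _)
    have h3 : ‖Λ‖ * (τ/(4*(‖Λ‖+1))) ≤ τ/4 := by
      have hn : (0:ℝ) ≤ ‖Λ‖ := norm_nonneg _
      rw [mul_div_assoc', div_le_div_iff₀ (by positivity) (by norm_num)]
      nlinarith
    have h4 : ‖Λ u - y‖ < τ/4 := by rw [← dist_eq_norm, dist_comm]; exact hw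
    calc ‖Λ g - y‖ ≤ ‖Λ g - Λ u‖ + ‖Λ u - y‖ := norm_sub_le_norm_sub_add_norm_sub _ _ _
      _ ≤ τ/2 := by linarith
  choose gm hmem hdist using hy
  set M : ℕ := htfin.toFinset.sup (fun y => max (gm y).2 ⌈‖(gm y).1‖⌉₊) with hM
  refine ⟨M, GG_le hSne fun s hs => ?_⟩
  obtain ⟨y, hyt, hsy⟩ := Set.mem_iUnion₂.1 (htcov hs)
  have hyM : max (gm y).2 ⌈‖(gm y).1‖⌉₊ ≤ M := by
    rw [hM]
    exact Finset.le_sup (f := fun y => max (gm y).2 ⌈‖(gm y).1‖⌉₊) (htfin.mem_toFinset.2 hyt)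
  have hgB : (gm y).1 ∈ BMset ψ M := by
    refine ⟨FMset_mono ψ (le_trans (le_max_left _ _) hyM) (hmem y), ?_⟩
    calc ‖(gm y).1‖ ≤ (⌈‖(gm y).1‖⌉₊ : ℝ) := Nat.le_ceil _
      _ ≤ (M:ℝ) := by exact_mod_cast le_trans (le_max_right _ _) hyM
  have : infDist s (Λ '' BMset ψ M) ≤ dist s (Λ (gm y).1) :=
    infDist_le_dist_of_mem (Set.mem_image_of_mem _ hgB)
  have hd2 : dist s (Λ (gm y).1) ≤ dist s y + ‖Λ (gm y).1 - y‖ := by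
    have h6 := dist_triangle s y (Λ (gm y).1)
    have h5 : dist y (Λ (gm y).1) = ‖Λ (gm y).1 - y‖ := by rw [dist_comm, dist_eq_norm]
    linarith
  have hsy' : dist s y < τ/4 := Metric.mem_ball.1 hsy
  linarith [hdist y]

end Pointwise


set_option maxHeartbeats 4000000

/-- Approximate right inverse without analyticity (Theorem 7.1): if for every `z ∈ 𝒳` the
operator `𝔸(z,η) : F → 𝒯` has dense image for `ℓ`-almost every `η` in the compact support
`𝒦` of `ℓ`, then for every `ε = (ε₁, ε₂) ∈ (0,1)²` there are a continuous function
`𝔉 : 𝒳 × E → [0,∞)`, analytic in `η`, an integer `M ≥ 1` and constants `ν, C > 0` such that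
(i) `ℓ{η ∈ 𝒦 : 𝔉(z,η) ≤ ν} ≥ 1 − ε₁` for all `z`, and (ii) on the compact set
`𝒟 = {(z,η) : η ∈ 𝒦, 𝔉(z,η) ≤ 2ν}` there is a continuous family of operators
`R(z,η) : 𝒯 → F` with range in `F_M = span{ψ₀, …, ψ_{M−1}}`, norm at most `C`, and
`‖𝔸(z,η) R(z,η) f − f‖_𝒯 ≤ ε₂ ‖f‖_𝒱` for all `f ∈ 𝒱`. -/
theorem stmt3 {X E F T V : Type*}
    [MetricSpace X] [CompactSpace X]
    [NormedAddCommGroup E] [InnerProductSpace ℝ E] [CompleteSpace E] [SecondCountableTopology E]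
    [MeasurableSpace E] [BorelSpace E]
    [NormedAddCommGroup F] [InnerProductSpace ℝ F] [CompleteSpace F] [SecondCountableTopology F]
    [NormedAddCommGroup T] [InnerProductSpace ℝ T] [CompleteSpace T] [SecondCountableTopology T]
    [NormedAddCommGroup V] [InnerProductSpace ℝ V] [CompleteSpace V]
    -- 𝒱 is continuously embedded in 𝒯 and the inclusion is a compact operator
    (ι : V →L[ℝ] T) (hιinj : Function.Injective ι) (hιcomp : IsCompactOperator ι)
    (ℓ : Measure E) [IsProbabilityMeasure ℓ]
    (K : Set E) (hKsupp : K = {η : E | ∀ U ∈ nhds η, ℓ U ≠ 0}) (hKcomp : IsCompact K)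
    (ψ : HilbertBasis ℕ ℝ F)
    (A : X → E → (F →L[ℝ] T))
    (hAcont : Continuous fun p : X × E => A p.1 p.2)
    (hdense : ∀ z : X, ∃ Kz : Set E, Kz ⊆ K ∧ MeasurableSet Kz ∧ ℓ Kz = 1 ∧
      ∀ η ∈ Kz, Dense (Set.range (A z η))) :
    ∀ ε₁ ∈ Ioo (0 : ℝ) 1, ∀ ε₂ ∈ Ioo (0 : ℝ) 1,
      ∃ 𝔉 : X → E → ℝ,
        (Continuous fun p : X × E => 𝔉 p.1 p.2) ∧
        (∀ z η, 0 ≤ 𝔉 z η) ∧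
        (∀ z η, AnalyticAt ℝ (𝔉 z) η) ∧
        ∃ M : ℕ, 1 ≤ M ∧ ∃ ν C : ℝ, 0 < ν ∧ 0 < C ∧
          -- (i)
          (∀ z : X, 1 - ENNReal.ofReal ε₁ ≤ ℓ {η ∈ K | 𝔉 z η ≤ ν}) ∧
          -- 𝒟 is compact
          IsCompact {p : X × E | p.2 ∈ K ∧ 𝔉 p.1 p.2 ≤ 2 * ν} ∧
          -- (ii)
          ∃ R : X × E → (T →L[ℝ] F),
            ContinuousOn R {p : X × E | p.2 ∈ K ∧ 𝔉 p.1 p.2 ≤ 2 * ν} ∧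
            ∀ p ∈ {p : X × E | p.2 ∈ K ∧ 𝔉 p.1 p.2 ≤ 2 * ν},
              (∀ y : T, R p y ∈ Submodule.span ℝ (Set.range fun j : Fin M => ψ (j : ℕ))) ∧
              ‖R p‖ ≤ C ∧
              ∀ f : V, ‖A p.1 p.2 (R p (ι f)) - ι f‖ ≤ ε₂ * ‖f‖ := by
  intro ε₁ hε₁ ε₂ hε₂
  obtain ⟨hε₁0, hε₁1⟩ := hε₁
  obtain ⟨hε₂0, hε₂1⟩ := hε₂
  classical
  -- the compact set S ⊇ ι(B_V)
  have hιcomp' : IsCompactOperator ⇑(ι : V →ₗ[ℝ] T) := by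
    rwa [ContinuousLinearMap.coe_coe]
  set S : Set T := closure ((ι : V →ₗ[ℝ] T) '' Metric.closedBall 0 1) with hSdef
  have hScomp : IsCompact S := hιcomp'.isCompact_closure_image_closedBall 1
  have hS0 : (0 : T) ∈ S :=
    subset_closure ⟨0, Metric.mem_closedBall_self zero_le_one, map_zero _⟩
  have hSne : S.Nonempty := ⟨0, hS0⟩
  -- the functions G M
  set G : ℕ → X × E → ℝ := fun M p => GGdef S (BMset ψ M) (A p.1 p.2) with hGdef
  have hGcont : ∀ M, Continuous (G M) := fun M =>
    (GG_continuous hScomp hSne ⟨0, BMset_zero_mem ψ M⟩ (fun g hg => hg.2)).comp hAcont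
  have hGanti : ∀ {M M' : ℕ}, M ≤ M' → ∀ p, G M' p ≤ G M p := fun h p =>
    GG_anti hScomp hSne ⟨0, BMset_zero_mem ψ _⟩ (BMset_mono ψ h)
  have hGnonneg : ∀ M p, 0 ≤ G M p := fun M p => GG_nonneg hScomp hS0
  -- STEP 1 : a uniform M
  obtain ⟨M, hM1, hMmeas⟩ : ∃ M : ℕ, 1 ≤ M ∧ ∀ z : X,
      1 - ENNReal.ofReal ε₁ ≤ ℓ {η ∈ K | G M (z, η) ≤ ε₂ / 16} := by
    have key : ∀ z : X, ∃ M : ℕ, 1 ≤ M ∧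
        1 - ENNReal.ofReal ε₁ < ℓ {η ∈ K | G M (z, η) ≤ ε₂ / 32} := by
      intro z
      obtain ⟨Kz, hKzK, _, hKz1, hKzdense⟩ := hdense z
      set s : ℕ → Set E := fun M => {η ∈ K | G M (z, η) ≤ ε₂ / 32} with hs
      have hmono : Monotone s := fun M M' h η hη => ⟨hη.1, le_trans (hGanti h _) hη.2⟩
      have hsub : Kz ⊆ ⋃ M, s M := by
        intro η hη
        obtain ⟨M₀, hM₀⟩ := pointwise_small ψ hScomp hSne (A z η) (hKzdense η hη)
          (τ := ε₂ / 32) (by positivity)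
        exact Set.mem_iUnion.2 ⟨M₀, hKzK hη, hM₀⟩
      have h1 : (1 : ℝ≥0∞) ≤ ℓ (⋃ M, s M) := by
        rw [← hKz1]; exact measure_mono hsub
      have hlt : 1 - ENNReal.ofReal ε₁ < ℓ (⋃ M, s M) :=
        lt_of_lt_of_le
          (ENNReal.sub_lt_self ENNReal.one_ne_top one_ne_zero
            (ENNReal.ofReal_pos.2 hε₁0).ne') h1
      have hlim := tendsto_measure_iUnion_atTop (μ := ℓ) hmono
      have hev := hlim.eventually (eventually_gt_nhds hlt)
      obtain ⟨M₀, hM₀⟩ := (hev.and (Filter.eventually_ge_atTop 1)).exists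
      exact ⟨M₀, hM₀.2, hM₀.1⟩
    choose Mz hMz1 hMzmeas using key
    have tube : ∀ z : X, ∃ u : Set X, IsOpen u ∧ z ∈ u ∧
        ∀ z' ∈ u, ∀ η ∈ K, ‖A z' η - A z η‖ < ε₂ / (32 * (Mz z)) := by
      intro z
      have hMzpos : (0 : ℝ) < (Mz z : ℝ) := by exact_mod_cast hMz1 z
      have hc : (0 : ℝ) < ε₂ / (32 * (Mz z)) := by positivity
      set U : Set (X × E) := {p | ‖A p.1 p.2 - A z p.2‖ < ε₂ / (32 * (Mz z))} with hU
      have hUopen : IsOpen U := by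
        have hcont : Continuous fun p : X × E => ‖A p.1 p.2 - A z p.2‖ :=
          (hAcont.sub (hAcont.comp (continuous_const.prodMk continuous_snd))).norm
        exact isOpen_lt hcont continuous_const
      have hsub : {z} ×ˢ K ⊆ U := by
        rintro ⟨z', η⟩ ⟨hz', hη⟩
        rcases Set.mem_singleton_iff.1 hz' with rfl
        simpa [hU] using hc
      obtain ⟨u, v, huo, _, hzu, hKv, huv⟩ :=
        generalized_tube_lemma isCompact_singleton hKcomp hUopen hsub
      refine ⟨u, huo, hzu (Set.mem_singleton z), fun z' hz' η hη => ?_⟩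
      have h9 : (z', η) ∈ U := huv (Set.mem_prod.2 ⟨hz', hKv hη⟩)
      simpa [hU] using h9
    choose u huo hzu hutube using tube
    obtain ⟨t, ht⟩ := isCompact_univ.elim_finite_subcover u huo
      (fun z _ => Set.mem_iUnion.2 ⟨z, hzu z⟩)
    refine ⟨max 1 (t.sup Mz), le_max_left _ _, fun z => ?_⟩
    obtain ⟨z₀, hz₀t, hz₀u⟩ := Set.mem_iUnion₂.1 (ht (Set.mem_univ z))
    refine le_trans (le_of_lt (hMzmeas z₀)) (measure_mono ?_)
    rintro η ⟨hηK, hηG⟩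
    refine ⟨hηK, ?_⟩
    have l1 : G (max 1 (t.sup Mz)) (z, η) ≤ G (Mz z₀) (z, η) :=
      hGanti (le_trans (Finset.le_sup hz₀t) (le_max_right _ _)) _
    have l2 : G (Mz z₀) (z, η) ≤ G (Mz z₀) (z₀, η) + (Mz z₀ : ℝ) * ‖A z η - A z₀ η‖ := by
      have := GG_lip_one_sided (Λ := A z η) (Λ' := A z₀ η) hScomp hSne
        ⟨0, BMset_zero_mem ψ (Mz z₀)⟩ (fun g hg => hg.2)
      simpa using this
    have hM1' : (1 : ℝ) ≤ (Mz z₀ : ℝ) := by exact_mod_cast hMz1 z₀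
    have l3 : (Mz z₀ : ℝ) * ‖A z η - A z₀ η‖ ≤ ε₂ / 32 := by
      have h5 := hutube z₀ z hz₀u η hηK
      have h6 : (Mz z₀ : ℝ) * ‖A z η - A z₀ η‖ ≤ (Mz z₀ : ℝ) * (ε₂ / (32 * (Mz z₀))) :=
        mul_le_mul_of_nonneg_left h5.le (by linarith)
      have h7 : (Mz z₀ : ℝ) * (ε₂ / (32 * (Mz z₀))) = ε₂ / 32 := by
        field_simp
      linarith
    linarith
  -- STEP 2 : Stone–Weierstrass approximation of √(G M)
  set Q : Set (X × E) := Set.univ ×ˢ K with hQdef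
  have hQcomp : IsCompact Q := isCompact_univ.prod hKcomp
  set φ : X × E → ℝ := fun p => Real.sqrt (G M p) with hφdef
  have hφcont : Continuous φ := Real.continuous_sqrt.comp (hGcont M)
  obtain ⟨b₀, hb₀⟩ := hQcomp.exists_bound_of_continuousOn hφcont.continuousOn
  set b : ℝ := max b₀ 0 with hbdef
  have hb : ∀ p ∈ Q, φ p ≤ b := fun p hp =>
    le_trans (le_abs_self _) (le_trans (hb₀ p hp) (le_max_left _ _))
  have hbnn : 0 ≤ b := le_max_right _ _
  set δ₁ : ℝ := min 1 (ε₂ / (16 * (2 * b + 1))) with hδ₁def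
  have hδ₁pos : 0 < δ₁ := lt_min one_pos (by positivity)
  obtain ⟨h, hhcont, hhan, hhnear⟩ := analytic_approx Q hQcomp φ hφcont δ₁ hδ₁pos
  set 𝔉 : X → E → ℝ := fun z η => (h (z, η)) ^ 2 with h𝔉def
  have hFcont : Continuous fun p : X × E => 𝔉 p.1 p.2 := by
    exact (hhcont.pow 2)
  have hFnonneg : ∀ z η, 0 ≤ 𝔉 z η := fun z η => sq_nonneg _
  have hFan : ∀ z η, AnalyticAt ℝ (𝔉 z) η := fun z η => (hhan z η).pow 2
  -- the key approximation bound on Q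
  have hFG : ∀ p ∈ Q, |𝔉 p.1 p.2 - G M p| ≤ ε₂ / 16 := by
    intro p hp
    have h1 : |h p - φ p| < δ₁ := hhnear p hp
    have h2 : 0 ≤ φ p := Real.sqrt_nonneg _
    have h3 : φ p ≤ b := hb p hp
    have h4 : φ p ^ 2 = G M p := Real.sq_sqrt (hGnonneg M p)
    have h5 : 𝔉 p.1 p.2 - G M p = (h p - φ p) * (h p + φ p) := by
      have he : 𝔉 p.1 p.2 = h p ^ 2 := rfl
      rw [he, ← h4]; ring
    have h6 : |𝔉 p.1 p.2 - G M p| ≤ |h p - φ p| * (|h p - φ p| + 2 * φ p) := by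
      rw [h5, abs_mul]
      have e : h p + φ p = (h p - φ p) + 2 * φ p := by ring
      have ha := abs_add_le (h p - φ p) (2 * φ p)
      rw [abs_of_nonneg (by linarith : (0:ℝ) ≤ 2 * φ p)] at ha
      rw [e]
      exact mul_le_mul_of_nonneg_left (le_trans ha le_rfl) (abs_nonneg _)
    have hδ₁1 : δ₁ ≤ 1 := min_le_left _ _
    have hδ₁2 : δ₁ ≤ ε₂ / (16 * (2 * b + 1)) := min_le_right _ _
    have h7 : |h p - φ p| * (|h p - φ p| + 2 * φ p) ≤ δ₁ * (1 + 2 * b) := by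
      apply mul_le_mul h1.le _ (by positivity) (by linarith [hδ₁pos])
      linarith [h1.le]
    have h8 : δ₁ * (1 + 2 * b) ≤ ε₂ / 16 := by
      have h9 : δ₁ * (16 * (2 * b + 1)) ≤ ε₂ := (le_div_iff₀ (by positivity)).1 hδ₁2
      rw [le_div_iff₀ (by norm_num : (0:ℝ) < 16)]
      nlinarith
    linarith
  -- the constants
  set ν : ℝ := ε₂ / 8 with hνdef
  have hνpos : 0 < ν := by positivity
  -- property (i)
  have hi : ∀ z : X, 1 - ENNReal.ofReal ε₁ ≤ ℓ {η ∈ K | 𝔉 z η ≤ ν} := by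
    intro z
    refine le_trans (hMmeas z) (measure_mono ?_)
    rintro η ⟨hηK, hηG⟩
    refine ⟨hηK, ?_⟩
    have := hFG (z, η) (Set.mem_prod.2 ⟨Set.mem_univ _, hηK⟩)
    have habs := abs_le.1 this
    simp only at habs
    rw [hνdef]
    linarith [habs.1, habs.2]
  -- compactness of D
  set D : Set (X × E) := {p : X × E | p.2 ∈ K ∧ 𝔉 p.1 p.2 ≤ 2 * ν} with hDdef
  have hDsubQ : D ⊆ Q := fun p hp => Set.mem_prod.2 ⟨Set.mem_univ _, hp.1⟩
  have hDclosed : IsClosed D := by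
    have h1 : IsClosed {p : X × E | p.2 ∈ K} := hKcomp.isClosed.preimage continuous_snd
    have h2 : IsClosed {p : X × E | 𝔉 p.1 p.2 ≤ 2 * ν} := isClosed_le hFcont continuous_const
    exact h1.inter h2
  have hDcomp : IsCompact D := hQcomp.of_isClosed_subset hDclosed hDsubQ
  -- G is small on D
  have hGD : ∀ p ∈ D, G M p ≤ 5 * ε₂ / 16 := by
    rintro p ⟨hpK, hpF⟩
    have := abs_le.1 (hFG p (hDsubQ ⟨hpK, hpF⟩))
    have hν2 : 2 * ν = ε₂ / 4 := by rw [hνdef]; ring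
    linarith [this.1]
  -- The right inverse
  haveI hfd : FiniteDimensional ℝ (FMset ψ M) :=
    FiniteDimensional.span_of_finite ℝ (Set.finite_range _)
  have hMpos : (0 : ℝ) < (M : ℝ) := by exact_mod_cast hM1
  set δ : ℝ := ε₂ ^ 2 / (4 * (M : ℝ) ^ 2) with hδdef
  have hδpos : 0 < δ := by positivity
  set R : X × E → (T →L[ℝ] F) := fun p =>
    (FMset ψ M).subtypeL ∘L Ropdef ((A p.1 p.2) ∘L (FMset ψ M).subtypeL) δ with hRdef
  have hΛcont : Continuous fun p : X × E => (A p.1 p.2) ∘L (FMset ψ M).subtypeL :=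
    hAcont.clm_comp continuous_const
  have hRcont : Continuous R :=
    continuous_const.clm_comp ((Rop_continuous hδpos).comp hΛcont)
  obtain ⟨C₀, hC₀⟩ := hDcomp.exists_bound_of_continuousOn hRcont.continuousOn
  refine ⟨𝔉, hFcont, hFnonneg, hFan, M, hM1, ν, max C₀ 1, hνpos,
    lt_of_lt_of_le one_pos (le_max_right _ _), hi, hDcomp, R, hRcont.continuousOn,
    fun p hp => ⟨fun y => Submodule.coe_mem _, le_trans (hC₀ p hp) (le_max_left _ _),
    fun f => ?_⟩⟩
  -- the final estimate
  by_cases hf0 : f = 0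
  · simp [hf0]
  have hfpos : 0 < ‖f‖ := norm_pos_iff.2 hf0
  set Λ : F →L[ℝ] T := A p.1 p.2 with hΛdef
  set Λ₁ : (FMset ψ M) →L[ℝ] T := Λ ∘L (FMset ψ M).subtypeL with hΛ₁def
  set f' : V := ‖f‖⁻¹ • f with hf'def
  have hf'1 : ‖f'‖ = 1 := by
    rw [hf'def, norm_smul, norm_inv, norm_norm, inv_mul_cancel₀ hfpos.ne']
  have hιf'S : ι f' ∈ S := by
    apply subset_closure
    refine ⟨f', ?_, rfl⟩
    rw [Metric.mem_closedBall, dist_zero_right, hf'1]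
  have hinf : infDist (ι f') (Λ '' BMset ψ M) ≤ G M p := le_GG hScomp hιf'S
  have hinflt : infDist (ι f') (Λ '' BMset ψ M) < 3 * ε₂ / 8 :=
    lt_of_le_of_lt hinf (by linarith [hGD p hp])
  obtain ⟨y, ⟨g', hg'B, rfl⟩, hdist⟩ := (infDist_lt_iff
    ((Set.Nonempty.image _ ⟨0, BMset_zero_mem ψ M⟩))).1 hinflt
  -- the competitor
  set gc : FMset ψ M := ‖f‖ • (⟨g', hg'B.1⟩ : FMset ψ M) with hgcdef
  have hιf : ι f = ‖f‖ • ι f' := by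
    rw [hf'def, ι.map_smul, smul_smul, mul_inv_cancel₀ hfpos.ne', one_smul]
  have hΛgc : Λ₁ gc - ι f = ‖f‖ • (Λ g' - ι f') := by
    rw [hgcdef, Λ₁.map_smul, hιf, ← smul_sub]
    congr 1
  have hgcnorm : ‖gc‖ ≤ ‖f‖ * M := by
    rw [hgcdef, norm_smul, norm_norm]
    apply mul_le_mul_of_nonneg_left _ (norm_nonneg f)
    exact hg'B.2
  have hΛgcnorm : ‖Λ₁ gc - ι f‖ ≤ ‖f‖ * (3 * ε₂ / 8) := by
    rw [hΛgc, norm_smul, norm_norm]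
    apply mul_le_mul_of_nonneg_left _ (norm_nonneg f)
    rw [← dist_eq_norm, dist_comm]
    exact hdist.le
  have htik := tikhonov_min Λ₁ hδpos (ι f) gc
  have hRp : A p.1 p.2 (R p (ι f)) = Λ₁ (Ropdef Λ₁ δ (ι f)) := rfl
  rw [hRp]
  set a : ℝ := ‖Λ₁ (Ropdef Λ₁ δ (ι f)) - ι f‖ with hadef
  have hannn : 0 ≤ a := norm_nonneg _
  have hδM : δ * ((M : ℝ) * ‖f‖) ^ 2 = ε₂ ^ 2 * ‖f‖ ^ 2 / 4 := by
    rw [hδdef]; field_simp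
  have hbound : a ^ 2 ≤ (25 / 64) * (ε₂ * ‖f‖) ^ 2 := by
    have h1 : ‖Λ₁ gc - ι f‖ ^ 2 ≤ (‖f‖ * (3 * ε₂ / 8)) ^ 2 := by
      apply pow_le_pow_left₀ (norm_nonneg _) hΛgcnorm
    have h2 : ‖gc‖ ^ 2 ≤ (‖f‖ * M) ^ 2 := by
      apply pow_le_pow_left₀ (norm_nonneg _) hgcnorm
    have h3 := mul_le_mul_of_nonneg_left h2 hδpos.le
    nlinarith [norm_nonneg (Ropdef Λ₁ δ (ι f)), sq_nonneg (‖Ropdef Λ₁ δ (ι f)‖)]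
  nlinarith [mul_pos hε₂0 hfpos, sq_nonneg (a - ε₂ * ‖f‖), sq_nonneg (a + ε₂ * ‖f‖)]
end

section
/- Uniform measure bound for sublevel sets near a regular zero set (Lemma l2.6). There exists a constant C > 0 such that Leb({η ∈ O : |F(z, η)| ≤ r}) ≤ C·r for every z ∈ 𝒳 and every r ∈ [0, 1]. -/
open MeasureTheory Set
open scoped ENNReal NNReal RealInnerProductSpace

lemma slice_pi {m : ℕ} (T : Set (Fin (m+1) → ℝ)) (hT : MeasurableSet T) {L R : ℝ}
    (hL : 0 ≤ L) (hR : 0 ≤ R)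
    (hslice : ∀ u ∈ T, ∀ v ∈ T, (∀ i, i ≠ 0 → u i = v i) → |u 0 - v 0| ≤ L)
    (hbound : ∀ u ∈ T, ∀ i, |u i| ≤ R) :
    volume T ≤ ENNReal.ofReal (2*L) * (ENNReal.ofReal (2*R))^m := by
  classical
  have hmp := (measurePreserving_piFinSuccAbove (fun _ : Fin (m+1) => (volume : Measure ℝ)) 0).symm
  set e := MeasurableEquiv.piFinSuccAbove (fun _ : Fin (m+1) => ℝ) 0 with he
  have h1 : volume T
      = ((volume : Measure ℝ).prod (Measure.pi fun _ : Fin m => (volume : Measure ℝ)))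
        (e.symm ⁻¹' T) := by
    rw [volume_pi]
    exact (hmp.measure_preimage hT.nullMeasurableSet).symm
  have hsymm : ∀ (t : ℝ) (y : Fin m → ℝ), e.symm (t, y) = Fin.insertNth 0 t y := by
    intro t y
    simp [he, MeasurableEquiv.piFinSuccAbove, Fin.insertNthEquiv]
  set B : Set (Fin m → ℝ) := Set.univ.pi (fun _ => Icc (-R) R) with hB
  have hBmeas : MeasurableSet B := MeasurableSet.univ_pi (fun _ => measurableSet_Icc)
  have key : ∀ y : Fin m → ℝ,
      (volume : Measure ℝ) ((fun x => (x, y)) ⁻¹' (e.symm ⁻¹' T))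
        ≤ B.indicator (fun _ => ENNReal.ofReal (2*L)) y := by
    intro y
    by_cases hy : ∃ t : ℝ, e.symm (t, y) ∈ T
    · obtain ⟨t₀, ht₀⟩ := hy
      rw [hsymm] at ht₀
      have hyB : y ∈ B := by
        intro i _
        have := hbound _ ht₀ (Fin.succAbove 0 i)
        rw [Fin.insertNth_apply_succAbove] at this
        exact abs_le.1 this |> fun h => ⟨h.1, h.2⟩
      have hsub : ((fun x => (x, y)) ⁻¹' (e.symm ⁻¹' T)) ⊆ Icc (t₀ - L) (t₀ + L) := by
        intro t ht
        simp only [mem_preimage, hsymm] at ht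
        have hcoord : ∀ i, i ≠ 0 → Fin.insertNth (α := fun _ => ℝ) 0 t y i = Fin.insertNth (α := fun _ => ℝ) (0 : Fin (m+1)) t₀ y i := by
          intro i hi
          obtain ⟨j, rfl⟩ := Fin.exists_succAbove_eq hi
          rw [Fin.insertNth_apply_succAbove, Fin.insertNth_apply_succAbove]
        have := hslice _ ht _ ht₀ hcoord
        rw [Fin.insertNth_apply_same, Fin.insertNth_apply_same] at this
        constructor <;> [linarith [abs_le.1 this |>.1]; linarith [abs_le.1 this |>.2]]
      calc (volume : Measure ℝ) _ ≤ volume (Icc (t₀ - L) (t₀ + L)) := measure_mono hsub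
        _ = ENNReal.ofReal (2*L) := by rw [Real.volume_Icc]; ring_nf
        _ = B.indicator (fun _ => ENNReal.ofReal (2*L)) y := by rw [indicator_of_mem hyB]
    · have : ((fun x => (x, y)) ⁻¹' (e.symm ⁻¹' T)) = ∅ := by
        ext t; simp only [mem_preimage, mem_empty_iff_false, iff_false]
        exact fun h => hy ⟨t, h⟩
      simp [this]
  rw [h1, Measure.prod_apply_symm (e.symm.measurable hT)]
  calc ∫⁻ y, (volume : Measure ℝ) ((fun x => (x, y)) ⁻¹' (e.symm ⁻¹' T))
        ∂(Measure.pi fun _ : Fin m => (volume : Measure ℝ))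
      ≤ ∫⁻ y, B.indicator (fun _ => ENNReal.ofReal (2*L)) y
        ∂(Measure.pi fun _ : Fin m => (volume : Measure ℝ)) := lintegral_mono key
    _ = ENNReal.ofReal (2*L) * (Measure.pi fun _ : Fin m => (volume : Measure ℝ)) B := by
        rw [lintegral_indicator_const hBmeas]
    _ = ENNReal.ofReal (2*L) * (ENNReal.ofReal (2*R))^m := by
        rw [hB, Measure.pi_pi]
        congr 1
        simp [Real.volume_Icc]
        congr 1
        ring_nf
        rw [ENNReal.ofReal_mul' (by norm_num : (0:ℝ) ≤ 2)]
        simp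

lemma slice_E {E : Type*} [NormedAddCommGroup E] [InnerProductSpace ℝ E] [FiniteDimensional ℝ E]
    [MeasurableSpace E] [BorelSpace E] {m : ℕ} (hdim : Module.finrank ℝ E = m + 1)
    {e : E} (he : ‖e‖ = 1) (S : Set E) (hS : MeasurableSet S) {L R : ℝ} (hL : 0 ≤ L) (hR : 0 ≤ R)
    (hSR : ∀ x ∈ S, ‖x‖ ≤ R)
    (hslice : ∀ x ∈ S, ∀ t : ℝ, x + t • e ∈ S → |t| ≤ L) :
    volume S ≤ ENNReal.ofReal (2*L) * (ENNReal.ofReal (2*R))^m := by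
  classical
  have hcard : Module.finrank ℝ E = Fintype.card (Fin (m+1)) := by simpa using hdim
  have horth : Orthonormal ℝ (({0} : Set (Fin (m+1))).restrict (fun _ => e)) := by
    constructor
    · intro i; exact he
    · intro i j hij
      exact absurd (Subsingleton.elim i j) hij
  obtain ⟨b, hb⟩ := Orthonormal.exists_orthonormalBasis_extension_of_card_eq hcard horth
  have hb0 : b 0 = e := hb 0 rfl
  set φ : (Fin (m+1) → ℝ) → E :=
    fun u => b.repr.symm ((MeasurableEquiv.toLp 2 (Fin (m+1) → ℝ)).symm.symm u) with hφ
  set T : Set (Fin (m+1) → ℝ) := φ ⁻¹' S with hTdef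
  have hφmeas : Measurable φ :=
    (b.repr.symm.continuous.measurable).comp (MeasurableEquiv.toLp 2 (Fin (m+1) → ℝ)).symm.symm.measurable
  have hT : MeasurableSet T := hφmeas hS
  have hrepr : ∀ u : Fin (m+1) → ℝ, ∀ i, b.repr (φ u) i = u i := by
    intro u i
    simp [hφ, MeasurableEquiv.toLp_apply]
  have hvol : volume T = volume S := by
    have h1 : volume (b.repr.symm ⁻¹' S) = volume S :=
      b.measurePreserving_repr_symm.measure_preimage hS.nullMeasurableSet
    have h2 : volume ((MeasurableEquiv.toLp 2 (Fin (m+1) → ℝ)).symm.symm ⁻¹' (b.repr.symm ⁻¹' S))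
        = volume (b.repr.symm ⁻¹' S) :=
      ((EuclideanSpace.volume_preserving_symm_measurableEquiv_toLp (Fin (m+1))).symm
        (MeasurableEquiv.toLp 2 (Fin (m+1) → ℝ)).symm).measure_preimage
        (b.repr.symm.continuous.measurable hS).nullMeasurableSet
    rw [← h1, ← h2]; rfl
  rw [← hvol]
  apply slice_pi T hT hL hR
  · intro u hu v hv hagree
    have hx : φ u ∈ S := hu
    have hy : φ v ∈ S := hv
    have hsingle : b.repr (φ v - φ u) = EuclideanSpace.single 0 (v 0 - u 0) := by
      ext i
      rw [map_sub]
      have : b.repr (φ v) i - b.repr (φ u) i = v i - u i := by rw [hrepr, hrepr]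
      rw [show (b.repr (φ v) - b.repr (φ u)) i = b.repr (φ v) i - b.repr (φ u) i from rfl, this,
        EuclideanSpace.single_apply]
      by_cases hi : i = 0
      · subst hi; simp
      · rw [if_neg hi, hagree i hi, sub_self]
    have h4 : φ v - φ u = (v 0 - u 0) • e := by
      have h5 := congrArg b.repr.symm hsingle
      have hs : EuclideanSpace.single (0 : Fin (m+1)) (v 0 - u 0)
          = (v 0 - u 0) • EuclideanSpace.single (0 : Fin (m+1)) (1:ℝ) := by
        ext i
        simp [EuclideanSpace.single_apply]
      rwa [LinearIsometryEquiv.symm_apply_apply, hs, LinearIsometryEquiv.map_smul,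
        OrthonormalBasis.repr_symm_single, hb0] at h5
    have h6 : φ u + (v 0 - u 0) • e ∈ S := by
      rw [← eq_add_of_sub_eq' h4]; exact hy
    have := hslice (φ u) hx (v 0 - u 0) h6
    rwa [abs_sub_comm]
  · intro u hu i
    have h8 := abs_real_inner_le_norm (b i) (φ u)
    rw [← b.repr_apply_apply, hrepr] at h8
    have h9 : ‖b i‖ = 1 := b.orthonormal.1 i
    rw [h9, one_mul] at h8
    exact h8.trans (hSR _ hu)

set_option maxHeartbeats 1000000 in
/-- Uniform measure bound for sublevel sets near a regular zero set: if `F : 𝒳 × E → ℝ` is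
continuous, smooth in the second variable with jointly continuous derivative, has `0` as a
regular value on a compact convex set `O`, and has uniformly bounded derivative on `𝒳 × O`,
then `Leb({η ∈ O : |F(z,η)| ≤ r}) ≤ C r` uniformly in `z ∈ 𝒳` and `r ∈ [0,1]`. -/
theorem stmt5 {X E : Type*} [MetricSpace X] [CompactSpace X]
    [NormedAddCommGroup E] [InnerProductSpace ℝ E] [FiniteDimensional ℝ E]
    [MeasurableSpace E] [BorelSpace E]
    (μ : Measure E) [μ.IsAddHaarMeasure]
    (O : Set E) (hOne : O.Nonempty) (hOcomp : IsCompact O) (hOconv : Convex ℝ O)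
    (F : X → E → ℝ)
    (hFcont : Continuous fun p : X × E => F p.1 p.2)
    (hFsmooth : ∀ z, ContDiff ℝ (⊤ : ℕ∞) (F z))
    (hreg : ∀ z, ∀ η ∈ O, F z η = 0 → fderiv ℝ (F z) η ≠ 0)
    (hDcont : Continuous fun p : X × E => fderiv ℝ (F p.1) p.2)
    (K : ℝ) (hK : ∀ z, ∀ η ∈ O, ‖fderiv ℝ (F z) η‖ ≤ K) :
    ∃ C : ℝ, 0 < C ∧ ∀ z : X, ∀ r ∈ Icc (0 : ℝ) 1,
      μ {η ∈ O | |F z η| ≤ r} ≤ ENNReal.ofReal (C * r) := by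
  classical
  rcases isEmpty_or_nonempty X with hXe | hXne
  · exact ⟨1, one_pos, fun z => (IsEmpty.false z).elim⟩
  obtain ⟨z₀⟩ := hXne
  -- bound on O
  obtain ⟨R₀, hR₀⟩ := hOcomp.isBounded.subset_closedBall 0
  set R : ℝ := max R₀ 0 with hRdef
  have hR0 : (0:ℝ) ≤ R := le_max_right _ _
  have hRO : ∀ x ∈ O, ‖x‖ ≤ R := by
    intro x hx
    have := hR₀ hx
    rw [Metric.mem_closedBall, dist_zero_right] at this
    exact this.trans (le_max_left _ _)
  -- continuity of each F z
  have hFz : ∀ z, Continuous (F z) := fun z => hFcont.comp (Continuous.prodMk_right z)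
  -- minimum of max ‖D‖ |F| over X × O
  set φ : X × E → ℝ := fun p => max ‖fderiv ℝ (F p.1) p.2‖ |F p.1 p.2| with hφdef
  have hφcont : Continuous φ := hDcont.norm.max hFcont.abs
  have hXO : IsCompact ((univ : Set X) ×ˢ O) := isCompact_univ.prod hOcomp
  have hXOne : ((univ : Set X) ×ˢ O).Nonempty :=
    ⟨(z₀, hOne.choose), mem_prod.2 ⟨trivial, hOne.choose_spec⟩⟩
  obtain ⟨p₀, hp₀mem, hp₀⟩ := hXO.exists_isMinOn hXOne hφcont.continuousOn
  set c : ℝ := φ p₀ with hcdef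
  have hcpos : 0 < c := by
    rcases lt_or_ge 0 (|F p₀.1 p₀.2|) with h | h
    · exact lt_max_of_lt_right h
    · have hF0 : F p₀.1 p₀.2 = 0 := abs_nonpos_iff.mp h
      have h2 := hreg p₀.1 p₀.2 (mem_prod.1 hp₀mem).2 hF0
      exact lt_max_of_lt_left (norm_pos_iff.mpr h2)
  have hlow : ∀ z, ∀ η ∈ O, |F z η| ≤ c/2 → c ≤ ‖fderiv ℝ (F z) η‖ := by
    intro z η hη hF
    have h1 : c ≤ φ (z, η) := hp₀ (mem_prod.2 ⟨trivial, hη⟩)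
    by_contra hlt
    push_neg at hlt
    have h2 : φ (z, η) < c := max_lt hlt (lt_of_le_of_lt hF (half_lt_self hcpos))
    exact absurd h1 (not_le.mpr h2)
  -- uniform continuity of the derivative
  have hUC := hXO.uniformContinuousOn_of_continuous hDcont.continuousOn
  rw [Metric.uniformContinuousOn_iff] at hUC
  obtain ⟨δ, hδpos, hδ⟩ := hUC (c/2) (by positivity)
  -- finite cover of O by balls of radius δ/2
  obtain ⟨t, htO, htfin, htcover⟩ := hOcomp.finite_cover_balls (show (0:ℝ) < δ/2 by positivity)
  set tf := htfin.toFinset with htf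
  set m : ℕ := Module.finrank ℝ E - 1 with hmdef
  set A₀ : ℝ := 8/c * (2*R)^m with hA₀def
  have hA₀0 : 0 ≤ A₀ := by positivity
  -- per-ball estimate
  have key : ∀ z : X, ∀ r : ℝ, 0 ≤ r → r ≤ c/2 → ∀ x₀ ∈ t,
      volume ({η ∈ O | |F z η| ≤ r} ∩ Metric.ball x₀ (δ/2)) ≤ ENNReal.ofReal (A₀ * r) := by
    intro z r hr0 hrc x₀ hx₀
    set Si := {η ∈ O | |F z η| ≤ r} ∩ Metric.ball x₀ (δ/2) with hSidef
    rcases eq_empty_or_nonempty Si with hemp | ⟨η₀, hη₀⟩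
    · rw [hemp]; simp
    have hη₀O : η₀ ∈ O := hη₀.1.1
    have hη₀F : |F z η₀| ≤ r := hη₀.1.2
    have hη₀b : η₀ ∈ Metric.ball x₀ (δ/2) := hη₀.2
    have hD : c ≤ ‖fderiv ℝ (F z) η₀‖ := hlow z η₀ hη₀O (hη₀F.trans hrc)
    -- dimension is positive
    have hdim_pos : Module.finrank ℝ E ≠ 0 := by
      intro h0
      have : Subsingleton E := Module.finrank_zero_iff.mp h0
      have h1 : fderiv ℝ (F z) η₀ = 0 := Subsingleton.elim _ _
      rw [h1, norm_zero] at hD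
      exact absurd hD (not_le.mpr hcpos)
    obtain ⟨m', hm'⟩ := Nat.exists_eq_succ_of_ne_zero hdim_pos
    have hmm : m = m' := by rw [hmdef, hm', Nat.succ_sub_one]
    -- the gradient direction
    set v : E := (InnerProductSpace.toDual ℝ E).symm (fderiv ℝ (F z) η₀) with hvdef
    have hvnorm : ‖v‖ = ‖fderiv ℝ (F z) η₀‖ := LinearIsometryEquiv.norm_map _ _
    have hvpos : 0 < ‖v‖ := by rw [hvnorm]; linarith
    have hvne : v ≠ 0 := by intro h; rw [h, norm_zero] at hvpos; exact lt_irrefl _ hvpos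
    set e : E := ‖v‖⁻¹ • v with hedef
    have he : ‖e‖ = 1 := norm_smul_inv_norm hvne
    have hDe : fderiv ℝ (F z) η₀ e = ‖v‖ := by
      have h1 : inner ℝ v e = fderiv ℝ (F z) η₀ e := InnerProductSpace.toDual_symm_apply
      rw [← h1, hedef, real_inner_smul_right, real_inner_self_eq_norm_mul_norm]
      field_simp
    clear_value v
    clear_value e
    -- measurability of Si
    have hSiclosed : MeasurableSet Si := by
      have h1 : IsClosed {η ∈ O | |F z η| ≤ r} := by
        have : {η ∈ O | |F z η| ≤ r} = O ∩ (fun η => |F z η|) ⁻¹' Iic r := rfl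
        rw [this]
        exact hOcomp.isClosed.inter (isClosed_Iic.preimage (hFz z).abs)
      exact h1.measurableSet.inter Metric.isOpen_ball.measurableSet
    -- slice bound
    have hslice : ∀ x ∈ Si, ∀ s : ℝ, x + s • e ∈ Si → |s| ≤ 4*r/c := by
      intro x hx s hxs
      rcases eq_or_ne s 0 with rfl | hs0
      · rw [abs_zero]; positivity
      set x' := x + s • e with hx'def
      have hxO : x ∈ O := hx.1.1
      have hx'O : x' ∈ O := hxs.1.1
      have hxb : x ∈ Metric.ball x₀ (δ/2) := hx.2
      have hx'b : x' ∈ Metric.ball x₀ (δ/2) := hxs.2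
      set g : ℝ → ℝ := fun s => F z (x + s • e) with hgdef
      have hg : ∀ s : ℝ, HasDerivAt g ((fderiv ℝ (F z) (x + s • e)) e) s := by
        intro s
        have h1 : HasDerivAt (fun s : ℝ => x + s • e) e s := by
          simpa using ((hasDerivAt_id s).smul_const e).const_add x
        have h2 : HasFDerivAt (F z) (fderiv ℝ (F z) (x + s • e)) (x + s • e) :=
          ((hFsmooth z).differentiable (by simp) _).hasFDerivAt
        exact h2.comp_hasDerivAt s h1
      -- points on the segment are in O and in the δ/2-ball
      have hseg : ∀ u ∈ Set.uIcc (0:ℝ) s, x + u • e ∈ O ∧ x + u • e ∈ Metric.ball x₀ (δ/2) := by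
        intro u hu
        have hθ : u / s ∈ Icc (0:ℝ) 1 := by
          rcases Set.mem_uIcc.1 hu with ⟨h1, h2⟩ | ⟨h1, h2⟩
          · have hspos : 0 < s := lt_of_le_of_ne (h1.trans h2) (Ne.symm hs0)
            exact ⟨div_nonneg h1 hspos.le, (div_le_one hspos).2 h2⟩
          · have hsneg : s < 0 := lt_of_le_of_ne (h1.trans h2) hs0
            constructor
            · rw [div_nonneg_iff]
              right
              exact ⟨h2, hsneg.le⟩
            · rw [div_le_one_of_neg hsneg]
              exact h1
        have heq : x + u • e = x + (u/s) • (s • e) := by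
          rw [smul_smul, div_mul_cancel₀ _ hs0]
        constructor
        · rw [heq]
          exact hOconv.add_smul_mem hxO (by rw [← hx'def]; exact hx'O) hθ
        · rw [heq]
          exact (convex_ball x₀ (δ/2)).add_smul_mem hxb (by rw [← hx'def]; exact hx'b) hθ
      have hgc : ∀ u ∈ Set.uIcc (0:ℝ) s, c/2 ≤ (fderiv ℝ (F z) (x + u • e)) e := by
        intro u hu
        obtain ⟨hyO, hyb⟩ := hseg u hu
        have hdist : dist (x + u • e) η₀ < δ := by
          calc dist (x + u • e) η₀ ≤ dist (x + u • e) x₀ + dist x₀ η₀ := dist_triangle _ _ _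
            _ < δ/2 + δ/2 := by
                have := Metric.mem_ball.1 hyb
                have h2 := Metric.mem_ball.1 hη₀b
                rw [dist_comm x₀ η₀]
                linarith
            _ = δ := by ring
        have hd := hδ (z, x + u • e) (mem_prod.2 ⟨trivial, hyO⟩) (z, η₀)
          (mem_prod.2 ⟨trivial, hη₀O⟩) (by
            rw [Prod.dist_eq]
            simp only [dist_self]
            rw [max_eq_right dist_nonneg]
            exact hdist)
        rw [dist_eq_norm] at hd
        have hb : |((fderiv ℝ (F z) (x + u • e)) - (fderiv ℝ (F z) η₀)) e|
            ≤ ‖(fderiv ℝ (F z) (x + u • e)) - (fderiv ℝ (F z) η₀)‖ := by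
          have h5 := ContinuousLinearMap.le_opNorm
            ((fderiv ℝ (F z) (x + u • e)) - (fderiv ℝ (F z) η₀)) e
          rwa [Real.norm_eq_abs, he, mul_one] at h5
        have heval : (fderiv ℝ (F z) (x + u • e)) e
            = (fderiv ℝ (F z) η₀) e + ((fderiv ℝ (F z) (x + u • e)) - (fderiv ℝ (F z) η₀)) e := by
          rw [ContinuousLinearMap.sub_apply]; ring
        rw [heval, hDe]
        have h3 := abs_le.1 hb
        have h4 : ‖v‖ ≥ c := by rw [hvnorm]; exact hD
        linarith
      -- mean value estimate
      have hgcont : ContinuousOn g (Set.uIcc 0 s) :=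
        (((hFz z).comp (continuous_const.add (continuous_id.smul continuous_const)))).continuousOn
      have hgdiff : DifferentiableOn ℝ g (interior (Set.uIcc 0 s)) :=
        fun u _ => (hg u).differentiableAt.differentiableWithinAt
      have hderiv : ∀ u ∈ interior (Set.uIcc 0 s), c/2 ≤ deriv g u := by
        intro u hu
        rw [(hg u).deriv]
        exact hgc u (interior_subset hu)
      have hMVT := (convex_uIcc (0:ℝ) s).mul_sub_le_image_sub_of_le_deriv hgcont hgdiff hderiv
        (min 0 s) (by rcases min_choice (0:ℝ) s with h | h <;> rw [h]
                      exacts [Set.left_mem_uIcc, Set.right_mem_uIcc])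
        (max 0 s) (by rcases max_choice (0:ℝ) s with h | h <;> rw [h]
                      exacts [Set.left_mem_uIcc, Set.right_mem_uIcc])
        (min_le_max)
      have habs : max 0 s - min 0 s = |s| := by
        rw [max_sub_min_eq_abs]
        simp
      have hg0 : |g 0| ≤ r := by
        have : g 0 = F z x := by rw [hgdef]; simp
        rw [this]; exact hx.1.2
      have hgs : |g s| ≤ r := by
        have : g s = F z x' := rfl
        rw [this]; exact hxs.1.2
      have hgm : g (max 0 s) - g (min 0 s) ≤ 2*r := by
        have h1 := abs_le.1 hg0
        have h2 := abs_le.1 hgs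
        rcases max_choice (0:ℝ) s with h | h <;> rcases min_choice (0:ℝ) s with h' | h' <;>
          rw [h, h'] <;> linarith
      rw [habs] at hMVT
      rw [le_div_iff₀ hcpos] -- |s| ≤ 4*r/c ↔ |s| * c ≤ 4*r
      linarith
    -- apply the slicing lemma
    have hSR : ∀ x ∈ Si, ‖x‖ ≤ R := fun x hx => hRO x hx.1.1
    have hfinal := slice_E (by rw [hm'] : Module.finrank ℝ E = m' + 1) he Si hSiclosed
      (by positivity : (0:ℝ) ≤ 4*r/c) hR0 hSR hslice
    calc volume Si ≤ ENNReal.ofReal (2*(4*r/c)) * (ENNReal.ofReal (2*R))^m' := hfinal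
      _ = ENNReal.ofReal (A₀ * r) := by
          rw [← ENNReal.ofReal_pow (by positivity), ← ENNReal.ofReal_mul (by positivity)]
          congr 1
          rw [hA₀def, hmm]
          field_simp
          ring
  -- global small-r bound for `volume`
  have main_small : ∀ z : X, ∀ r : ℝ, 0 ≤ r → r ≤ c/2 →
      volume {η ∈ O | |F z η| ≤ r} ≤ (tf.card : ℝ≥0∞) * ENNReal.ofReal (A₀ * r) := by
    intro z r hr0 hrc
    have hsub : {η ∈ O | |F z η| ≤ r} ⊆ ⋃ x ∈ tf, ({η ∈ O | |F z η| ≤ r} ∩ Metric.ball x (δ/2)) := by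
      intro η hη
      have := htcover hη.1
      simp only [mem_iUnion] at this ⊢
      obtain ⟨x, hx, hb⟩ := this
      exact ⟨x, (htfin.mem_toFinset).2 hx, hη, hb⟩
    calc volume {η ∈ O | |F z η| ≤ r}
        ≤ volume (⋃ x ∈ tf, ({η ∈ O | |F z η| ≤ r} ∩ Metric.ball x (δ/2))) := measure_mono hsub
      _ ≤ ∑ x ∈ tf, volume ({η ∈ O | |F z η| ≤ r} ∩ Metric.ball x (δ/2)) :=
          measure_biUnion_finset_le _ _
      _ ≤ ∑ _x ∈ tf, ENNReal.ofReal (A₀ * r) := by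
          apply Finset.sum_le_sum
          intro x hx
          exact key z r hr0 hrc x ((htfin.mem_toFinset).1 hx)
      _ = (tf.card : ℝ≥0∞) * ENNReal.ofReal (A₀ * r) := by
          rw [Finset.sum_const, nsmul_eq_mul]
  -- compare μ with volume
  have hμeq : μ = Measure.addHaarScalarFactor μ (volume : Measure E) • (volume : Measure E) :=
    Measure.isAddLeftInvariant_eq_smul μ volume
  set κ : ℝ := ((Measure.addHaarScalarFactor μ (volume : Measure E) : ℝ≥0) : ℝ) with hκdef
  have hκ0 : 0 ≤ κ := NNReal.coe_nonneg _
  have hμap : ∀ s : Set E, μ s = ENNReal.ofReal κ * volume s := by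
    intro s
    rw [hμeq]
    simp only [Measure.smul_apply, smul_eq_mul]
    congr 1
    rw [hκdef]
    exact Real.toNNReal_coe.symm
  set Mμ : ℝ := (μ O).toReal with hMdef
  have hM0 : 0 ≤ Mμ := ENNReal.toReal_nonneg
  have hμO : μ O = ENNReal.ofReal Mμ := by
    rw [hMdef, ENNReal.ofReal_toReal hOcomp.measure_lt_top.ne]
  set C : ℝ := κ * (tf.card * A₀) + Mμ/(c/2) + 1 with hCdef
  refine ⟨C, by
    have : 0 ≤ κ * (tf.card * A₀) := mul_nonneg hκ0 (mul_nonneg (Nat.cast_nonneg _) hA₀0)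
    have := div_nonneg hM0 (half_pos hcpos).le
    linarith, ?_⟩
  intro z r hr
  obtain ⟨hr0, hr1⟩ := hr
  have hCrest : 0 ≤ κ * (tf.card * A₀) := mul_nonneg hκ0 (mul_nonneg (Nat.cast_nonneg _) hA₀0)
  have hM2 : 0 ≤ Mμ/(c/2) := by positivity
  rcases le_or_gt r (c/2) with hrc | hrc
  · -- small r
    have h1 := main_small z r hr0 hrc
    rw [hμap]
    calc ENNReal.ofReal κ * volume {η ∈ O | |F z η| ≤ r}
        ≤ ENNReal.ofReal κ * ((tf.card : ℝ≥0∞) * ENNReal.ofReal (A₀ * r)) := by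
          exact mul_le_mul_right h1 _
      _ = ENNReal.ofReal (κ * (tf.card * A₀) * r) := by
          rw [← ENNReal.ofReal_natCast tf.card, ← ENNReal.ofReal_mul (Nat.cast_nonneg _),
            ← ENNReal.ofReal_mul hκ0]
          congr 1
          ring
      _ ≤ ENNReal.ofReal (C * r) := by
          apply ENNReal.ofReal_le_ofReal
          apply mul_le_mul_of_nonneg_right _ hr0
          rw [hCdef]; linarith
  · -- large r
    have h1 : μ {η ∈ O | |F z η| ≤ r} ≤ μ O := measure_mono (fun η hη => hη.1)
    rw [hμO] at h1
    refine h1.trans (ENNReal.ofReal_le_ofReal ?_)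
    have h2 : Mμ/(c/2) * (c/2) ≤ Mμ/(c/2) * r := by
      apply mul_le_mul_of_nonneg_left hrc.le hM2
    have h3 : Mμ/(c/2) * (c/2) = Mμ := by field_simp
    have h4 : C * r ≥ (Mμ/(c/2)) * r := by
      apply mul_le_mul_of_nonneg_right _ hr0
      rw [hCdef]; linarith
    calc Mμ = Mμ/(c/2) * (c/2) := h3.symm
      _ ≤ Mμ/(c/2) * r := h2
      _ ≤ C * r := h4
end

section
/- Uniform measure bound for tubular neighborhoods of the nodal set (Corollary 4.3 in the appendix). For z ∈ 𝒳 let 𝒩(z) := {η ∈ O : F(z, η) = 0}. There exists a constant C > 0 such that for every z ∈ 𝒳 and every r ∈ [0, 1], Leb({η ∈ O : there exists η′ ∈ 𝒩(z) with ‖η − η′‖ ≤ r}) ≤ C·r. -/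
open MeasureTheory Set Metric ENNReal in

private lemma tube_core_aux {E : Type*} [NormedAddCommGroup E] [NormedSpace ℝ E]
    [FiniteDimensional ℝ E] [MeasurableSpace E] [BorelSpace E]
    (μ : Measure E) [μ.IsAddHaarMeasure]
    (G : E → ℝ) (hG : Differentiable ℝ G)
    (x₀ e : E) (he : ‖e‖ ≤ 1) (ρ b s : ℝ) (hρ : 0 < ρ) (hb : 0 < b) (hs : 0 < s)
    (hder : ∀ η ∈ ball x₀ ρ, b ≤ fderiv ℝ G η e) :
    μ {η ∈ ball x₀ ρ | |G η| ≤ s}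
      ≤ ENNReal.ofReal ((μ (closedBall x₀ (2*ρ))).toReal * (4 / (b * ρ)) * s) := by
  set S := {η ∈ ball x₀ ρ | |G η| ≤ s} with hS
  set t0 : ℝ := 4 * s / b with ht0def
  have ht0 : 0 < t0 := by positivity
  -- separation
  have hsep : ∀ η ∈ S, ∀ t : ℝ, t0 ≤ t → η + t • e ∉ S := by
    intro η hη t ht hmem
    have htpos : 0 < t := lt_of_lt_of_le ht0 ht
    have hline : ∀ u ∈ Icc (0:ℝ) t, η + u • e ∈ ball x₀ ρ := by
      intro u hu
      have h2 : 0 ≤ u / t := div_nonneg hu.1 htpos.le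
      have h3 : u / t ≤ 1 := div_le_one_of_le₀ hu.2 htpos.le
      have h1 : (1 - u / t) • η + (u / t) • (η + t • e) = η + u • e := by
        have hut : (u / t) * t = u := div_mul_cancel₀ u htpos.ne'
        rw [smul_add, smul_smul, hut]
        module
      rw [← h1]
      exact (convex_ball x₀ ρ) hη.1 hmem.1 (by linarith) h2 (by ring)
    set g : ℝ → ℝ := fun u => G (η + u • e) with hg
    have hgd : ∀ u : ℝ, HasDerivAt g (fderiv ℝ G (η + u • e) e) u := by
      intro u
      have h1 : HasDerivAt (fun u : ℝ => η + u • e) e u := by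
        simpa using ((hasDerivAt_id u).smul_const e).const_add η
      exact (hG (η + u • e)).hasFDerivAt.comp_hasDerivAt u h1
    have key : b * (t - 0) ≤ g t - g 0 := by
      apply Convex.mul_sub_le_image_sub_of_le_deriv (convex_Icc 0 t)
        (fun u _ => (hgd u).continuousAt.continuousWithinAt)
        (fun u _ => (hgd u).differentiableAt.differentiableWithinAt)
        (fun u hu => ?_) 0 (left_mem_Icc.2 htpos.le) t (right_mem_Icc.2 htpos.le) htpos.le
      rw [(hgd u).deriv]
      exact hder _ (hline u (interior_subset hu))
    have h0 : g 0 = G η := by simp [hg]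
    have h1 : g t = G (η + t • e) := rfl
    have e1 : |G η| ≤ s := hη.2
    have e2 : |G (η + t • e)| ≤ s := hmem.2
    have hbt : (4:ℝ) * s ≤ b * t := by
      have h5 : b * t0 ≤ b * t := by nlinarith
      calc (4:ℝ) * s = b * (4 * s / b) := by field_simp
      _ ≤ b * t := h5
    have e1' := abs_le.1 e1
    have e2' := abs_le.1 e2
    rw [h0, h1] at key
    nlinarith [e1'.1, e1'.2, e2'.1, e2'.2]
  set N : ℕ := ⌊ρ / t0⌋₊ with hN
  have hNle : (N : ℝ) * t0 ≤ ρ := by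
    have h6 := Nat.floor_le (by positivity : (0:ℝ) ≤ ρ / t0)
    calc (N : ℝ) * t0 ≤ (ρ / t0) * t0 := by nlinarith
    _ = ρ := div_mul_cancel₀ ρ ht0.ne'
  have hNge : ρ / t0 < (N : ℝ) + 1 := Nat.lt_floor_add_one _
  set T : ℕ → Set E := fun k => (fun η => η + ((k : ℝ) * t0) • e) '' S with hT
  have hSmeas : MeasurableSet S := by
    have h7 : S = ball x₀ ρ ∩ G ⁻¹' {y : ℝ | |y| ≤ s} := rfl
    rw [h7]
    exact measurableSet_ball.inter (hG.continuous.measurable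
      (measurableSet_le (measurable_id.norm) measurable_const))
  have hTmeas : ∀ k, MeasurableSet (T k) := by
    intro k
    simp only [hT]
    rw [Set.image_add_right]
    exact hSmeas.preimage (by fun_prop)
  have hTμ : ∀ k, μ (T k) = μ S := by
    intro k
    simp only [hT]
    rw [Set.image_add_right]
    exact measure_preimage_add_right μ _ S
  have hdisj : ∀ j k : ℕ, j < k → Disjoint (T j) (T k) := by
    intro j k hjk
    rw [Set.disjoint_left]
    intro x hxj hxk
    simp only [hT, Set.mem_image] at hxj hxk
    obtain ⟨η, hη, hje⟩ := hxj
    obtain ⟨η', hη', hke⟩ := hxk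
    have ht : t0 ≤ ((k : ℝ) - j) * t0 := by
      have h8 : (1:ℝ) ≤ (k : ℝ) - j := by
        have : (j:ℝ) + 1 ≤ k := by exact_mod_cast hjk
        linarith
      nlinarith
    apply hsep η' hη' (((k : ℝ) - j) * t0) ht
    have hxe : η' + ((k:ℝ)*t0) • e = η + ((j:ℝ)*t0) • e := by rw [hke, hje]
    have h9 : η' + (((k:ℝ) - ↑j) * t0) • e = η := by
      rw [sub_mul, sub_smul, ← add_sub_assoc, hxe, add_sub_cancel_right]
    rw [h9]; exact hη
  have hsub : ∀ k ∈ Finset.range (N+1), T k ⊆ closedBall x₀ (2*ρ) := by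
    intro k hk x hx
    obtain ⟨η, hη, rfl⟩ := hx
    have hk' : (k:ℝ) ≤ N := by exact_mod_cast Nat.lt_succ_iff.1 (Finset.mem_range.1 hk)
    have hkt0 : (0:ℝ) ≤ (k:ℝ) * t0 := mul_nonneg (Nat.cast_nonneg k) ht0.le
    have h1 : dist (η + ((k:ℝ) * t0) • e) x₀ ≤ ‖((k:ℝ) * t0) • e‖ + dist η x₀ := by
      calc dist (η + ((k:ℝ) * t0) • e) x₀ ≤ dist (η + ((k:ℝ) * t0) • e) η + dist η x₀ :=
            dist_triangle _ _ _
      _ = ‖((k:ℝ) * t0) • e‖ + dist η x₀ := by rw [dist_eq_norm, add_sub_cancel_left]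
    have h2 : ‖((k:ℝ) * t0) • e‖ ≤ (k:ℝ) * t0 := by
      rw [norm_smul, Real.norm_eq_abs, abs_of_nonneg hkt0]
      exact mul_le_of_le_one_right hkt0 he
    have h3 : dist η x₀ < ρ := mem_ball.1 hη.1
    have h4 : (k:ℝ) * t0 ≤ ρ := le_trans (mul_le_mul_of_nonneg_right hk' ht0.le) hNle
    rw [mem_closedBall]
    linarith
  have hcard : ((N:ℝ≥0∞) + 1) * μ S ≤ μ (closedBall x₀ (2*ρ)) := by
    have hpd : Set.PairwiseDisjoint ↑(Finset.range (N+1)) T := by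
      intro j _ k _ hjk
      rcases lt_or_gt_of_ne hjk with h | h
      · exact hdisj j k h
      · exact (hdisj k j h).symm
    have heq := measure_biUnion_finset (μ := μ) hpd (fun k _ => hTmeas k)
    have hle : μ (⋃ k ∈ Finset.range (N+1), T k) ≤ μ (closedBall x₀ (2*ρ)) :=
      measure_mono (Set.iUnion₂_subset hsub)
    rw [heq] at hle
    calc ((N:ℝ≥0∞) + 1) * μ S = ∑ k ∈ Finset.range (N+1), μ (T k) := by
          rw [Finset.sum_congr rfl (fun k _ => hTμ k), Finset.sum_const, Finset.card_range,
            nsmul_eq_mul]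
          push_cast
          ring
    _ ≤ _ := hle
  -- final arithmetic
  have hBfin : μ (closedBall x₀ (2*ρ)) ≠ ⊤ := (isCompact_closedBall x₀ (2*ρ)).measure_ne_top
  set M : ℝ := (μ (closedBall x₀ (2*ρ))).toReal with hM
  have hM0 : 0 ≤ M := ENNReal.toReal_nonneg
  have hMeq : μ (closedBall x₀ (2*ρ)) = ENNReal.ofReal M := (ENNReal.ofReal_toReal hBfin).symm
  by_contra hcon
  push_neg at hcon
  have hkey : M ≤ M * (4 / (b * ρ)) * s * ((N:ℝ) + 1) := by
    have h1 : b * ρ / (4 * s) < (N:ℝ) + 1 := by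
      have h2 : ρ / t0 = b * ρ / (4 * s) := by
        rw [ht0def]; field_simp
      linarith [h2 ▸ hNge]
    have h2 : (0:ℝ) < b * ρ := by positivity
    have h3 : M * (b * ρ / (4 * s)) ≤ M * ((N:ℝ) + 1) := by
      exact mul_le_mul_of_nonneg_left h1.le hM0
    have h4 : M * (4 / (b * ρ)) * s * (b * ρ / (4 * s)) = M := by
      field_simp
    have h5 : 0 ≤ M * (4 / (b * ρ)) * s := by positivity
    calc M = M * (4 / (b * ρ)) * s * (b * ρ / (4 * s)) := h4.symm
    _ ≤ M * (4 / (b * ρ)) * s * ((N:ℝ) + 1) := mul_le_mul_of_nonneg_left h1.le h5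
  have hlt : μ (closedBall x₀ (2*ρ)) < ((N:ℝ≥0∞) + 1) * μ S := by
    rw [hMeq]
    calc ENNReal.ofReal M ≤ ENNReal.ofReal (M * (4 / (b * ρ)) * s * ((N:ℝ) + 1)) :=
          ENNReal.ofReal_le_ofReal hkey
    _ = ENNReal.ofReal (M * (4 / (b * ρ)) * s) * ENNReal.ofReal ((N:ℝ) + 1) := by
          rw [← ENNReal.ofReal_mul' (by positivity)]
    _ = ENNReal.ofReal ((N:ℝ) + 1) * ENNReal.ofReal (M * (4 / (b * ρ)) * s) := mul_comm _ _
    _ < ENNReal.ofReal ((N:ℝ) + 1) * μ S :=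
          ENNReal.mul_lt_mul_right (ENNReal.ofReal_pos.2 (by positivity)).ne'
            ENNReal.ofReal_ne_top hcon
    _ = ((N:ℝ≥0∞) + 1) * μ S := by
          congr 1
          rw [ENNReal.ofReal_add (Nat.cast_nonneg N) zero_le_one]
          simp [ENNReal.ofReal_natCast]
  exact absurd hcard (not_le.2 hlt)

open MeasureTheory Set Metric ENNReal in

private lemma tube_sublevel_aux {X E : Type*} [MetricSpace X] [CompactSpace X] [Nonempty X]
    [NormedAddCommGroup E] [InnerProductSpace ℝ E] [FiniteDimensional ℝ E]
    [MeasurableSpace E] [BorelSpace E]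
    (μ : Measure E) [μ.IsAddHaarMeasure]
    (O : Set E) (hOne : O.Nonempty) (hOcomp : IsCompact O)
    (F : X → E → ℝ)
    (hFcont : Continuous fun p : X × E => F p.1 p.2)
    (hFsmooth : ∀ z, ContDiff ℝ (⊤ : ℕ∞) (F z))
    (hreg : ∀ z, ∀ η ∈ O, F z η = 0 → fderiv ℝ (F z) η ≠ 0)
    (hDcont : Continuous fun p : X × E => fderiv ℝ (F p.1) p.2)
    (tube_core : ∀ (G : E → ℝ), Differentiable ℝ G → ∀ (x₀ e : E), ‖e‖ ≤ 1 →
      ∀ (ρ b s : ℝ), 0 < ρ → 0 < b → 0 < s →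
      (∀ η ∈ ball x₀ ρ, b ≤ fderiv ℝ G η e) →
      μ {η ∈ ball x₀ ρ | |G η| ≤ s}
        ≤ ENNReal.ofReal ((μ (closedBall x₀ (2*ρ))).toReal * (4 / (b * ρ)) * s)) :
    ∃ C : ℝ, 0 < C ∧ ∀ z : X, ∀ s : ℝ, 0 < s →
      μ {η ∈ O | |F z η| ≤ s} ≤ ENNReal.ofReal (C * s) := by
  classical
  set Q : Set (X × E) := (univ : Set X) ×ˢ O with hQ
  have hQcomp : IsCompact Q := isCompact_univ.prod hOcomp
  have hQne : Q.Nonempty := ⟨(Classical.arbitrary X, hOne.choose), mem_univ _, hOne.choose_spec⟩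
  set g : X × E → ℝ := fun p => max |F p.1 p.2| ‖fderiv ℝ (F p.1) p.2‖ with hg
  have hgcont : Continuous g := (hFcont.abs).max hDcont.norm
  have hgpos : ∀ p ∈ Q, 0 < g p := by
    rintro ⟨z, η⟩ ⟨-, hη⟩
    rcases eq_or_ne (F z η) 0 with h | h
    · exact lt_max_of_lt_right (norm_pos_iff.2 (hreg z η hη h))
    · exact lt_max_of_lt_left (abs_pos.2 h)
  obtain ⟨p₀, hp₀Q, hp₀⟩ := hQcomp.exists_isMinOn hQne hgcont.continuousOn
  set ε : ℝ := g p₀ with hε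
  have hεpos : 0 < ε := hgpos p₀ hp₀Q
  have hεle : ∀ p ∈ Q, ε ≤ g p := fun p hp => hp₀ hp
  -- choice of product balls
  have hchoice : ∀ p : X × E, p.2 ∈ O → ∃ ρ : ℝ, 0 < ρ ∧
      ((∀ q : X × E, q.1 ∈ ball p.1 ρ → q.2 ∈ ball p.2 ρ → ε/2 ≤ |F q.1 q.2|) ∨
       (∃ e : E, ‖e‖ ≤ 1 ∧ ∀ q : X × E, q.1 ∈ ball p.1 ρ → q.2 ∈ ball p.2 ρ →
          ε/2 ≤ fderiv ℝ (F q.1) q.2 e)) := by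
    intro p hp
    have hmax : ε ≤ g p := hεle p ⟨mem_univ _, hp⟩
    rcases le_max_iff.1 hmax with hcase | hcase
    · -- |F p| ≥ ε
      have hopen : IsOpen {q : X × E | ε/2 < |F q.1 q.2|} :=
        isOpen_lt continuous_const hFcont.abs
      have hpmem : p ∈ {q : X × E | ε/2 < |F q.1 q.2|} := by
        simp only [mem_setOf_eq]; linarith
      obtain ⟨ρ, hρ, hball⟩ := Metric.isOpen_iff.1 hopen p hpmem
      refine ⟨ρ, hρ, Or.inl fun q hq1 hq2 => ?_⟩
      have : q ∈ ball p ρ := by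
        rw [mem_ball, Prod.dist_eq]
        exact max_lt (mem_ball.1 hq1) (mem_ball.1 hq2)
      exact (hball this).le
    · -- ‖D p‖ ≥ ε
      set D := fderiv ℝ (F p.1) p.2 with hD
      have hDnorm : ε ≤ ‖D‖ := hcase
      set v : E := (InnerProductSpace.toDual ℝ E).symm D with hv
      have hvnorm : ‖v‖ = ‖D‖ := LinearIsometryEquiv.norm_map _ _
      have hvpos : 0 < ‖v‖ := by rw [hvnorm]; linarith
      set e : E := ‖v‖⁻¹ • v with he
      have henorm : ‖e‖ = 1 := by
        rw [he, norm_smul, norm_inv, norm_norm, inv_mul_cancel₀ hvpos.ne']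
      have hDe : D e = ‖D‖ := by
        have h1 : D e = (inner ℝ v e : ℝ) := by
          rw [hv, ← InnerProductSpace.toDual_symm_apply]
        rw [h1, he, real_inner_smul_right, real_inner_self_eq_norm_sq]
        rw [← hvnorm]
        field_simp
      have hopen : IsOpen {q : X × E | ε/2 < fderiv ℝ (F q.1) q.2 e} := by
        have hc : Continuous fun q : X × E => fderiv ℝ (F q.1) q.2 e :=
          (ContinuousLinearMap.apply ℝ ℝ e).continuous.comp hDcont
        exact isOpen_lt continuous_const hc
      have hpmem : p ∈ {q : X × E | ε/2 < fderiv ℝ (F q.1) q.2 e} := by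
        simp only [mem_setOf_eq, ← hD, hDe]
        linarith
      obtain ⟨ρ, hρ, hball⟩ := Metric.isOpen_iff.1 hopen p hpmem
      refine ⟨ρ, hρ, Or.inr ⟨e, henorm.le, fun q hq1 hq2 => ?_⟩⟩
      have : q ∈ ball p ρ := by
        rw [mem_ball, Prod.dist_eq]
        exact max_lt (mem_ball.1 hq1) (mem_ball.1 hq2)
      exact (hball this).le
  -- finite subcover
  set ι := {p : X × E // p.2 ∈ O} with hι
  choose! ρfun hρpos hρalt using fun (i : ι) => hchoice i.1 i.2
  set U : ι → Set (X × E) := fun i => ball i.1.1 (ρfun i) ×ˢ ball i.1.2 (ρfun i) with hU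
  have hUopen : ∀ i, IsOpen (U i) := fun i => isOpen_ball.prod isOpen_ball
  have hcover : Q ⊆ ⋃ i, U i := by
    rintro ⟨z, η⟩ ⟨-, hη⟩
    exact mem_iUnion.2 ⟨⟨(z, η), hη⟩, mem_ball_self (hρpos _), mem_ball_self (hρpos _)⟩
  obtain ⟨t, ht⟩ := hQcomp.elim_finite_subcover U hUopen hcover
  -- constants
  set c : ι → ℝ := fun i => (μ (closedBall i.1.2 (2 * ρfun i))).toReal * (8 / (ε * ρfun i))
    with hc
  have hcnn : ∀ i, 0 ≤ c i := by
    intro i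
    have h1 := hρpos i
    have : (0:ℝ) ≤ (μ (closedBall i.1.2 (2 * ρfun i))).toReal := ENNReal.toReal_nonneg
    have : (0:ℝ) ≤ 8 / (ε * ρfun i) := by positivity
    positivity
  set MO : ℝ := (μ O).toReal with hMO
  have hMOnn : 0 ≤ MO := ENNReal.toReal_nonneg
  set C : ℝ := (∑ i ∈ t, c i) + 2 * MO / ε + 1 with hC
  have hsumnn : 0 ≤ ∑ i ∈ t, c i := Finset.sum_nonneg fun i _ => hcnn i
  have hCpos : 0 < C := by positivity
  refine ⟨C, hCpos, fun z s hs => ?_⟩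
  by_cases hsε : s < ε/2
  · -- covering bound
    set A : ι → Set E := fun i =>
      if z ∈ ball i.1.1 (ρfun i) then ({η ∈ O | |F z η| ≤ s} ∩ ball i.1.2 (ρfun i)) else ∅
      with hA
    have hcover2 : {η ∈ O | |F z η| ≤ s} ⊆ ⋃ i ∈ t, A i := by
      rintro η ⟨hηO, hηs⟩
      have hzη : (z, η) ∈ Q := ⟨mem_univ _, hηO⟩
      obtain ⟨i, hit, hmem⟩ := mem_iUnion₂.1 (ht hzη)
      refine mem_iUnion₂.2 ⟨i, hit, ?_⟩
      rw [hA]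
      simp only [if_pos hmem.1]
      exact ⟨⟨hηO, hηs⟩, hmem.2⟩
    have hAbound : ∀ i ∈ t, μ (A i) ≤ ENNReal.ofReal (c i * s) := by
      intro i _
      rw [hA]
      by_cases hz : z ∈ ball i.1.1 (ρfun i)
      · simp only [if_pos hz]
        rcases hρalt i with hcaseA | ⟨e, he1, hcaseB⟩
        · -- type A : empty
          have hempty : {η ∈ O | |F z η| ≤ s} ∩ ball i.1.2 (ρfun i) = ∅ := by
            ext η
            simp only [mem_inter_iff, mem_setOf_eq, mem_empty_iff_false, iff_false]
            rintro ⟨⟨hηO, hηs⟩, hηb⟩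
            have := hcaseA (z, η) hz hηb
            simp only at this
            linarith
          rw [hempty]
          simp
        · -- type B
          have hsubset : {η ∈ O | |F z η| ≤ s} ∩ ball i.1.2 (ρfun i)
              ⊆ {η ∈ ball i.1.2 (ρfun i) | |F z η| ≤ s} := by
            rintro η ⟨⟨-, hηs⟩, hηb⟩
            exact ⟨hηb, hηs⟩
          have hder : ∀ η ∈ ball i.1.2 (ρfun i), ε/2 ≤ fderiv ℝ (F z) η e :=
            fun η hη => hcaseB (z, η) hz hη
          have hcore := tube_core (F z) ((hFsmooth z).differentiable (by simp)) i.1.2 e he1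
            (ρfun i) (ε/2) s (hρpos i) (by linarith) hs hder
          have harith : (μ (closedBall i.1.2 (2 * ρfun i))).toReal * (4 / (ε/2 * ρfun i)) * s
              = c i * s := by
            rw [hc]
            have h1 : ε/2 * ρfun i ≠ 0 := by
              have := hρpos i; positivity
            have h2 : (4 : ℝ) / (ε/2 * ρfun i) = 8 / (ε * ρfun i) := by
              rw [div_eq_div_iff h1 (by have := hρpos i; positivity)]
              ring
            rw [h2]
          calc μ _ ≤ μ {η ∈ ball i.1.2 (ρfun i) | |F z η| ≤ s} := measure_mono hsubset
          _ ≤ ENNReal.ofReal ((μ (closedBall i.1.2 (2 * ρfun i))).toReal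
                * (4 / (ε/2 * ρfun i)) * s) := hcore
          _ = ENNReal.ofReal (c i * s) := by rw [harith]
      · simp only [if_neg hz]
        simp
    calc μ {η ∈ O | |F z η| ≤ s} ≤ μ (⋃ i ∈ t, A i) := measure_mono hcover2
    _ ≤ ∑ i ∈ t, μ (A i) := measure_biUnion_finset_le t A
    _ ≤ ∑ i ∈ t, ENNReal.ofReal (c i * s) := Finset.sum_le_sum hAbound
    _ = ENNReal.ofReal (∑ i ∈ t, c i * s) :=
        (ENNReal.ofReal_sum_of_nonneg fun i _ => mul_nonneg (hcnn i) hs.le).symm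
    _ ≤ ENNReal.ofReal (C * s) := by
        apply ENNReal.ofReal_le_ofReal
        rw [← Finset.sum_mul]
        have : (∑ i ∈ t, c i) ≤ C := by
          rw [hC]
          have : 0 ≤ 2 * MO / ε := by positivity
          linarith
        nlinarith
  · -- trivial bound
    push_neg at hsε
    have hOfin : μ O ≠ ⊤ := hOcomp.measure_ne_top
    calc μ {η ∈ O | |F z η| ≤ s} ≤ μ O := measure_mono (sep_subset _ _)
    _ = ENNReal.ofReal MO := (ENNReal.ofReal_toReal hOfin).symm
    _ ≤ ENNReal.ofReal (C * s) := by
        apply ENNReal.ofReal_le_ofReal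
        have h1 : (1:ℝ) ≤ 2 / ε * s := by
          have he1 : 2 / ε * (ε/2) = 1 := by field_simp
          have he2 : (0:ℝ) < 2 / ε := by positivity
          nlinarith
        have h4 : (2 * MO / ε) * s ≤ C * s := by
          apply mul_le_mul_of_nonneg_right _ hs.le
          rw [hC]; linarith
        calc MO = MO * 1 := (mul_one MO).symm
        _ ≤ MO * (2 / ε * s) := mul_le_mul_of_nonneg_left h1 hMOnn
        _ = (2 * MO / ε) * s := by ring
        _ ≤ C * s := h4

open MeasureTheory Set

/-- Uniform measure bound for tubular neighborhoods of the nodal set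
`𝒩(z) = {η ∈ O : F(z,η) = 0}`: under the regularity assumptions of Lemma l2.6,
`Leb({η ∈ O : dist(η, 𝒩(z)) ≤ r}) ≤ C r` uniformly in `z ∈ 𝒳` and `r ∈ [0,1]`. -/
theorem stmt6 {X E : Type*} [MetricSpace X] [CompactSpace X]
    [NormedAddCommGroup E] [InnerProductSpace ℝ E] [FiniteDimensional ℝ E]
    [MeasurableSpace E] [BorelSpace E]
    (μ : Measure E) [μ.IsAddHaarMeasure]
    (O : Set E) (hOne : O.Nonempty) (hOcomp : IsCompact O) (hOconv : Convex ℝ O)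
    (F : X → E → ℝ)
    (hFcont : Continuous fun p : X × E => F p.1 p.2)
    (hFsmooth : ∀ z, ContDiff ℝ (⊤ : ℕ∞) (F z))
    (hreg : ∀ z, ∀ η ∈ O, F z η = 0 → fderiv ℝ (F z) η ≠ 0)
    (hDcont : Continuous fun p : X × E => fderiv ℝ (F p.1) p.2)
    (K : ℝ) (hK : ∀ z, ∀ η ∈ O, ‖fderiv ℝ (F z) η‖ ≤ K) :
    ∃ C : ℝ, 0 < C ∧ ∀ z : X, ∀ r ∈ Icc (0 : ℝ) 1,
      μ {η ∈ O | ∃ η' ∈ O, F z η' = 0 ∧ ‖η - η'‖ ≤ r} ≤ ENNReal.ofReal (C * r) := by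
  by_cases hX : Nonempty X
  · obtain ⟨C₀, hC₀pos, hC₀⟩ := tube_sublevel_aux μ O hOne hOcomp F hFcont hFsmooth hreg hDcont
      (fun G hG x₀ e he ρ b s hρ hb hs hder =>
        tube_core_aux μ G hG x₀ e he ρ b s hρ hb hs hder)
    set K₀ : ℝ := K + 1 with hK₀def
    have hKnn : 0 ≤ K := by
      obtain ⟨η₀, hη₀⟩ := hOne
      exact le_trans (norm_nonneg _) (hK (Classical.arbitrary X) η₀ hη₀)
    have hK₀pos : 0 < K₀ := by rw [hK₀def]; linarith
    have hlip : ∀ z : X, ∀ η ∈ O, ∀ η' ∈ O, |F z η - F z η'| ≤ K * ‖η - η'‖ := by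
      intro z η hη η' hη'
      have := hOconv.norm_image_sub_le_of_norm_fderiv_le
        (fun x _ => ((hFsmooth z).differentiable (by simp)).differentiableAt)
        (fun x hx => hK z x hx) hη' hη
      simpa [Real.norm_eq_abs] using this
    refine ⟨C₀ * K₀, by positivity, fun z r hr => ?_⟩
    rcases eq_or_lt_of_le hr.1 with hr0 | hr0
    · -- r = 0
      have hsub0 : ∀ s : ℝ, 0 < s →
          {η ∈ O | ∃ η' ∈ O, F z η' = 0 ∧ ‖η - η'‖ ≤ r} ⊆ {η ∈ O | |F z η| ≤ s} := by
        rintro s hs η ⟨hηO, η', hη'O, hFη', hdist⟩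
        have hle0 : ‖η - η'‖ ≤ 0 := by rw [← hr0] at hdist; exact hdist
        have : η = η' := by
          have := le_antisymm hle0 (norm_nonneg _)
          rwa [norm_eq_zero, sub_eq_zero] at this
        rw [this]
        exact ⟨hη'O, by rw [hFη']; simpa using hs.le⟩
      have hbnd : ∀ n : ℕ, μ {η ∈ O | ∃ η' ∈ O, F z η' = 0 ∧ ‖η - η'‖ ≤ r}
          ≤ ENNReal.ofReal (C₀ * (1 / (n + 1))) := by
        intro n
        have hpos : (0:ℝ) < 1 / (n + 1) := by positivity
        exact le_trans (measure_mono (hsub0 _ hpos)) (hC₀ z _ hpos)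
      have htends : Filter.Tendsto (fun n : ℕ => ENNReal.ofReal (C₀ * (1 / (n + 1))))
          Filter.atTop (nhds 0) := by
        have h1 : Filter.Tendsto (fun n : ℕ => C₀ * (1 / ((n:ℝ) + 1)))
            Filter.atTop (nhds (C₀ * 0)) :=
          Filter.Tendsto.const_mul C₀ tendsto_one_div_add_atTop_nhds_zero_nat
        rw [mul_zero] at h1
        simpa using ENNReal.tendsto_ofReal h1
      have h0 : μ {η ∈ O | ∃ η' ∈ O, F z η' = 0 ∧ ‖η - η'‖ ≤ r} ≤ 0 :=
        ge_of_tendsto' htends hbnd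
      calc μ {η ∈ O | ∃ η' ∈ O, F z η' = 0 ∧ ‖η - η'‖ ≤ r} ≤ 0 := h0
      _ ≤ ENNReal.ofReal (C₀ * K₀ * r) := zero_le'
    · -- r > 0
      have hsub : {η ∈ O | ∃ η' ∈ O, F z η' = 0 ∧ ‖η - η'‖ ≤ r}
          ⊆ {η ∈ O | |F z η| ≤ K₀ * r} := by
        rintro η ⟨hηO, η', hη'O, hFη', hdist⟩
        refine ⟨hηO, ?_⟩
        have h1 : |F z η| = |F z η - F z η'| := by rw [hFη', sub_zero]
        have h2 := hlip z η hηO η' hη'O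
        have h3 : K * ‖η - η'‖ ≤ K * r := mul_le_mul_of_nonneg_left hdist hKnn
        have h4 : K * r ≤ K₀ * r := mul_le_mul_of_nonneg_right (by rw [hK₀def]; linarith) hr.1
        linarith [h1 ▸ h2]
      calc μ {η ∈ O | ∃ η' ∈ O, F z η' = 0 ∧ ‖η - η'‖ ≤ r}
          ≤ μ {η ∈ O | |F z η| ≤ K₀ * r} := measure_mono hsub
      _ ≤ ENNReal.ofReal (C₀ * (K₀ * r)) := hC₀ z (K₀ * r) (by positivity)
      _ = ENNReal.ofReal (C₀ * K₀ * r) := by rw [mul_assoc]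
  · exact ⟨1, one_pos, fun z => (hX ⟨z⟩).elim⟩
end

section
/- Empty interior of the transporter set of projective measures (used in the proof of Theorem 3.2). Let d ≥ 2 and let ν, ν′ be Borel probability measures on the real projective space P^{d−1}. Then the set {A ∈ SL_d(ℝ) : A_*ν = ν′} has empty interior in SL_d(ℝ), where SL_d(ℝ) carries the subspace topology from the space of d×d real matrices. -/
open MeasureTheory Set
open scoped Classical

noncomputable section

/-- The underlying vector space `ℝ^d` with its Euclidean structure. -/
abbrev Vec (d : ℕ) := EuclideanSpace ℝ (Fin d)

/-- Nonzero vectors of `ℝ^d` are identified when proportional. -/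
def projSetoid (d : ℕ) : Setoid {v : Vec d // v ≠ 0} :=
  ⟨fun v w => ∃ c : ℝ, c ≠ 0 ∧ (w : Vec d) = c • (v : Vec d), by
    refine ⟨fun v => ⟨1, one_ne_zero, (one_smul _ _).symm⟩, ?_, ?_⟩
    · rintro v w ⟨c, hc, h⟩
      exact ⟨c⁻¹, inv_ne_zero hc, by rw [h, smul_smul, inv_mul_cancel₀ hc, one_smul]⟩
    · rintro u v w ⟨c, hc, h⟩ ⟨c', hc', h'⟩
      exact ⟨c' * c, mul_ne_zero hc' hc, by rw [h', h, smul_smul]⟩⟩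

/-- The real projective space `P^{d-1}`, as the quotient of `ℝ^d \ {0}` by proportionality,
equipped with the quotient topology. -/
abbrev Proj (d : ℕ) := Quotient (projSetoid d)

instance (priority := 2000) Proj.instMeasurableSpace (d : ℕ) : MeasurableSpace (Proj d) :=
  borel _

instance Proj.instBorelSpace (d : ℕ) : BorelSpace (Proj d) := ⟨rfl⟩

/-- The action of a `d × d` matrix on `ℝ^d`. -/
def matAct {d : ℕ} (A : Matrix (Fin d) (Fin d) ℝ) (v : Vec d) : Vec d :=
  Matrix.toEuclideanLin A v

/-- The map induced on `P^{d-1}` by a matrix `A` (defined arbitrarily on lines killed by `A`;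
for invertible `A` this is the standard induced projective map). -/
def projMap {d : ℕ} (A : Matrix (Fin d) (Fin d) ℝ) : Proj d → Proj d :=
  Quotient.map
    (fun v => if h : matAct A (v : Vec d) = 0 then v else ⟨matAct A (v : Vec d), h⟩)
    (by
      rintro v w ⟨c, hc, h⟩
      have hsmul : matAct A (w : Vec d) = c • matAct A (v : Vec d) := by
        simp [matAct, h, _root_.map_smul]
      by_cases h0 : matAct A (v : Vec d) = 0
      · have h0' : matAct A (w : Vec d) = 0 := by simp [hsmul, h0]
        simp [h0, h0']
        exact (⟨c, hc, h⟩ : ∃ c : ℝ, c ≠ 0 ∧ (w : Vec d) = c • (v : Vec d))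
      · have h0' : matAct A (w : Vec d) ≠ 0 := by
          simp only [hsmul]
          exact smul_ne_zero hc h0
        simpa [h0, h0'] using ⟨c, hc, hsmul⟩)

/-- The Frobenius (Euclidean) norm of a real matrix. -/
def mnorm {d : ℕ} (M : Matrix (Fin d) (Fin d) ℝ) : ℝ :=
  Real.sqrt (∑ i, ∑ j, (M i j) ^ 2)

/-- The support of a measure on a topological space: points all of whose neighborhoods
have positive measure. -/
def msupport {α : Type*} [TopologicalSpace α] [MeasurableSpace α] (μ : Measure α) : Set α :=
  {x | ∀ U ∈ nhds x, μ U ≠ 0}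

/-- Iterates `φ^n_ω = φ_{ω_{n-1}} ∘ ⋯ ∘ φ_{ω_0}` of the random dynamical system. -/
def phiIter {Ω Z : Type*} (φ : Ω → Z → Z) (ω : ℕ → Ω) : ℕ → Z → Z
  | 0, z => z
  | n + 1, z => φ (ω n) (phiIter φ ω n z)

/-- The linear cocycle `𝒜^n_{ω,z} = 𝒜(ω_{n-1}, φ^{n-1}_ω z) ⋯ 𝒜(ω_0, z)` over the RDS. -/
def cocycle {Ω Z : Type*} {d : ℕ} (φ : Ω → Z → Z)
    (𝒜 : Ω → Z → Matrix (Fin d) (Fin d) ℝ) (ω : ℕ → Ω) : ℕ → Z → Matrix (Fin d) (Fin d) ℝ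
  | 0, _ => 1
  | n + 1, z => 𝒜 (ω n) (phiIter φ ω n z) * cocycle φ 𝒜 ω n z

end

noncomputable section S9
namespace S9

variable {d : ℕ}

lemma matAct_mul (A B : Matrix (Fin d) (Fin d) ℝ) (v : Vec d) :
    matAct (A * B) v = matAct A (matAct B v) := by
  simp only [matAct, Matrix.toEuclideanLin_apply]
  congr 1
  simp [Matrix.mulVec_mulVec]

lemma matAct_one (v : Vec d) : matAct 1 v = v := by
  simp only [matAct, Matrix.toEuclideanLin_apply, Matrix.one_mulVec]

lemma matAct_ne {A : Matrix (Fin d) (Fin d) ℝ} (hA : A.det ≠ 0) {v : Vec d} (hv : v ≠ 0) :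
    matAct A v ≠ 0 := by
  intro h
  apply hv
  have h1 : matAct A⁻¹ (matAct A v) = v := by
    rw [← matAct_mul, Matrix.nonsing_inv_mul A (isUnit_iff_ne_zero.mpr hA), matAct_one]
  rw [h] at h1
  rw [← h1]
  simp [matAct]

lemma projMap_mk {A : Matrix (Fin d) (Fin d) ℝ} (hA : A.det ≠ 0) (v : {v : Vec d // v ≠ 0}) :
    projMap A (Quotient.mk (projSetoid d) v) =
      Quotient.mk (projSetoid d) ⟨matAct A (v : Vec d), matAct_ne hA v.2⟩ := by
  simp only [projMap, Quotient.map_mk]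
  congr 1
  rw [dif_neg (matAct_ne hA v.2)]

lemma projMap_comp {A B : Matrix (Fin d) (Fin d) ℝ} (hA : A.det ≠ 0) (hB : B.det ≠ 0) :
    projMap (A * B) = projMap A ∘ projMap B := by
  funext x
  induction x using Quotient.ind with
  | _ v =>
    have hAB : (A * B).det ≠ 0 := by
      rw [Matrix.det_mul]; exact mul_ne_zero hA hB
    simp only [Function.comp_apply, projMap_mk hAB, projMap_mk hB, projMap_mk hA]
    exact Quotient.sound ⟨1, one_ne_zero, by simp [matAct_mul]⟩

lemma projMap_one : (projMap (1 : Matrix (Fin d) (Fin d) ℝ)) = id := by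
  funext x
  induction x using Quotient.ind with
  | _ v =>
    have h1 : (1 : Matrix (Fin d) (Fin d) ℝ).det ≠ 0 := by simp
    simp only [projMap_mk h1, id_eq]
    exact Quotient.sound ⟨1, one_ne_zero, by simp [matAct_one]⟩

lemma continuous_matAct (A : Matrix (Fin d) (Fin d) ℝ) : Continuous (matAct A) :=
  LinearMap.continuous_of_finiteDimensional (Matrix.toEuclideanLin A)

lemma continuous_projMap {A : Matrix (Fin d) (Fin d) ℝ} (hA : A.det ≠ 0) :
    Continuous (projMap A) := by
  letI : Setoid {v : Vec d // v ≠ 0} := projSetoid d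
  rw [isQuotientMap_quotient_mk'.continuous_iff]
  have : (projMap A) ∘ (Quotient.mk' : _ → Proj d) =
      (Quotient.mk' : _ → Proj d) ∘ (fun v : {v : Vec d // v ≠ 0} =>
        (⟨matAct A (v : Vec d), matAct_ne hA v.2⟩ : {v : Vec d // v ≠ 0})) := by
    funext v
    exact projMap_mk hA v
  rw [this]
  exact continuous_quotient_mk'.comp
    (Continuous.subtype_mk ((continuous_matAct A).comp continuous_subtype_val) _)

lemma measurable_projMap {A : Matrix (Fin d) (Fin d) ℝ} (hA : A.det ≠ 0) :
    Measurable (projMap A) :=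
  (continuous_projMap hA).measurable

end S9
noncomputable section S9b
namespace S9
open Matrix

variable {d : ℕ}

lemma map_projMap_mul {A B : Matrix (Fin d) (Fin d) ℝ} (hA : A.det ≠ 0) (hB : B.det ≠ 0)
    (μ : Measure (Proj d)) :
    μ.map (projMap (A * B)) = (μ.map (projMap B)).map (projMap A) := by
  rw [Measure.map_map (measurable_projMap hA) (measurable_projMap hB), projMap_comp hA hB]

lemma det_inv_ne {A : Matrix (Fin d) (Fin d) ℝ} (hA : A.det ≠ 0) : (A⁻¹).det ≠ 0 := by
  rw [Matrix.det_nonsing_inv]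
  simpa using hA

lemma cancel_left {A B : Matrix (Fin d) (Fin d) ℝ} (hA : A.det ≠ 0) (hB : B.det ≠ 0)
    {μ μ' : Measure (Proj d)} (h1 : μ.map (projMap (A * B)) = μ')
    (h2 : μ.map (projMap A) = μ') : μ.map (projMap B) = μ := by
  have hu : IsUnit A.det := isUnit_iff_ne_zero.mpr hA
  have e1 : B = A⁻¹ * (A * B) := by rw [← Matrix.mul_assoc, Matrix.nonsing_inv_mul A hu, Matrix.one_mul]
  have hAB : (A * B).det ≠ 0 := by rw [Matrix.det_mul]; exact mul_ne_zero hA hB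
  calc μ.map (projMap B) = μ.map (projMap (A⁻¹ * (A * B))) := by rw [← e1]
    _ = (μ.map (projMap (A * B))).map (projMap A⁻¹) := map_projMap_mul (det_inv_ne hA) hAB μ
    _ = (μ.map (projMap A)).map (projMap A⁻¹) := by rw [h1, h2]
    _ = μ.map (projMap (A⁻¹ * A)) := (map_projMap_mul (det_inv_ne hA) hA μ).symm
    _ = μ := by rw [Matrix.nonsing_inv_mul A hu, projMap_one, Measure.map_id]

lemma stab_mul {A B : Matrix (Fin d) (Fin d) ℝ} (hA : A.det ≠ 0) (hB : B.det ≠ 0)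
    {μ : Measure (Proj d)} (h1 : μ.map (projMap A) = μ) (h2 : μ.map (projMap B) = μ) :
    μ.map (projMap (A * B)) = μ := by
  rw [map_projMap_mul hA hB, h2, h1]

/-! ### The matrix family `Mu` -/

def sig (d : ℕ) (τ : ℝ) : ℝ := τ ^ (-((d : ℝ) - 1)⁻¹)

def Mu (u : Vec d) (τ : ℝ) : Matrix (Fin d) (Fin d) ℝ :=
  sig d τ • (1 : Matrix (Fin d) (Fin d) ℝ)
    + (τ - sig d τ) • Matrix.vecMulVec (fun i => u i) (fun i => u i)

lemma sig_pos {τ : ℝ} (hτ : 0 < τ) : 0 < sig d τ := Real.rpow_pos_of_pos hτ _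

lemma sig_one : sig d 1 = 1 := Real.one_rpow _

lemma sig_mul {a b : ℝ} (ha : 0 < a) (hb : 0 < b) :
    sig d (a * b) = sig d a * sig d b := Real.mul_rpow ha.le hb.le

lemma sig_lt_one (hd : 2 ≤ d) {τ : ℝ} (hτ : 1 < τ) : sig d τ < 1 := by
  have h1 : (0:ℝ) < (d : ℝ) - 1 := by
    have : (2:ℝ) ≤ (d:ℝ) := by exact_mod_cast hd
    linarith
  have : -((d : ℝ) - 1)⁻¹ < 0 := by
    simp only [neg_neg, neg_lt, neg_zero]
    positivity
  simpa [sig] using Real.rpow_lt_one_of_one_lt_of_neg hτ this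

lemma usq {u : Vec d} (hu : ‖u‖ = 1) : ∑ i, u i * u i = 1 := by
  have h := EuclideanSpace.norm_eq u
  rw [hu] at h
  have h2 : ∑ i, ‖u i‖ ^ 2 = 1 := by
    have := Real.sq_sqrt (Finset.sum_nonneg fun i (_ : i ∈ Finset.univ) => sq_nonneg ‖u i‖)
    rw [← h] at this; linarith
  simpa [Real.norm_eq_abs, sq_abs, sq] using h2

lemma inner_eq_dot (u v : Vec d) : (inner ℝ u v : ℝ) = (fun i => u i) ⬝ᵥ (fun i => v i) := by
  simp [PiLp.inner_apply, RCLike.inner_apply, dotProduct, mul_comm]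

lemma vecMulVec_mul_vecMulVec (w v w' v' : Fin d → ℝ) :
    Matrix.vecMulVec w v * Matrix.vecMulVec w' v' = (v ⬝ᵥ w') • Matrix.vecMulVec w v' := by
  ext i j
  simp only [Matrix.mul_apply, Matrix.vecMulVec_apply, Matrix.smul_apply, dotProduct,
    smul_eq_mul, Finset.sum_mul]
  exact Finset.sum_congr rfl fun k _ => by ring

lemma vecMulVec_mulVec (w v x : Fin d → ℝ) :
    (Matrix.vecMulVec w v).mulVec x = (v ⬝ᵥ x) • w := by
  ext i
  simp only [Matrix.mulVec, Matrix.vecMulVec_apply, dotProduct, Pi.smul_apply,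
    smul_eq_mul, Finset.sum_mul]
  exact Finset.sum_congr rfl fun k _ => by ring

lemma Mu_one (u : Vec d) : Mu u 1 = 1 := by
  simp [Mu, sig_one]

lemma Mu_mul {u : Vec d} (hu : ‖u‖ = 1) {a b : ℝ} (ha : 0 < a) (hb : 0 < b) :
    Mu u a * Mu u b = Mu u (a * b) := by
  have hdot : (fun i => u i) ⬝ᵥ (fun i => u i) = 1 := by
    simpa [dotProduct] using usq hu
  simp only [Mu, Matrix.add_mul, Matrix.mul_add, Matrix.smul_mul, Matrix.mul_smul,
    Matrix.one_mul, Matrix.mul_one, smul_smul, vecMulVec_mul_vecMulVec, hdot, one_smul,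
    sig_mul ha hb]
  module

end S9
noncomputable section S9c
namespace S9
open Matrix

variable {d : ℕ}

lemma smul_vecMulVec (c : ℝ) (w v : Fin d → ℝ) :
    c • Matrix.vecMulVec w v = Matrix.vecMulVec (c • w) v := by
  ext i j
  simp [Matrix.vecMulVec_apply, mul_assoc]

lemma sig_pow_sub_one (hd : 2 ≤ d) {τ : ℝ} (hτ : 0 < τ) :
    sig d τ ^ (d - 1) = τ⁻¹ := by
  have h1 : ((d - 1 : ℕ) : ℝ) = (d : ℝ) - 1 := by
    have : 1 ≤ d := by omega
    push_cast [Nat.cast_sub this]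
    ring
  have hd1 : (d : ℝ) - 1 ≠ 0 := by
    have : (2 : ℝ) ≤ (d : ℝ) := by exact_mod_cast hd
    intro h; linarith
  calc sig d τ ^ (d - 1) = (τ ^ (-((d:ℝ) - 1)⁻¹)) ^ (((d - 1 : ℕ) : ℝ)) := by
        rw [Real.rpow_natCast]; rfl
    _ = τ ^ (-((d:ℝ) - 1)⁻¹ * ((d - 1 : ℕ) : ℝ)) := by
        rw [← Real.rpow_mul hτ.le]
    _ = τ ^ (-1 : ℝ) := by
        rw [h1]
        congr 1
        field_simp
    _ = τ⁻¹ := Real.rpow_neg_one τ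

lemma det_Mu (hd : 2 ≤ d) {u : Vec d} (hu : ‖u‖ = 1) {τ : ℝ} (hτ : 0 < τ) :
    (Mu u τ).det = 1 := by
  set σ := sig d τ with hσ
  have hσ0 : 0 < σ := sig_pos hτ
  have hMu : Mu u τ = σ • ((1 : Matrix (Fin d) (Fin d) ℝ)
      + Matrix.vecMulVec (((τ - σ)/σ) • fun i => u i) (fun i => u i)) := by
    rw [smul_add, ← smul_vecMulVec, smul_smul, mul_div_cancel₀ _ hσ0.ne']
    rfl
  have hdot : ((fun i => u i) ⬝ᵥ (((τ - σ)/σ) • fun i => u i)) = (τ - σ)/σ := by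
    have : ((fun i => u i) ⬝ᵥ (fun i => u i)) = 1 := by
      simpa [dotProduct] using usq hu
    rw [dotProduct_smul, this, smul_eq_mul, mul_one]
  rw [hMu, Matrix.det_smul, Matrix.vecMulVec_eq Unit, Matrix.det_one_add_replicateCol_mul_replicateRow, hdot]
  have hcard : Fintype.card (Fin d) = d := Fintype.card_fin d
  rw [hcard]
  have h2 : 1 + (τ - σ)/σ = τ / σ := by field_simp; ring
  rw [h2]
  have h3 : σ ^ d = σ ^ (d - 1) * σ := by
    rw [← pow_succ]
    congr 1
    omega
  rw [h3, sig_pow_sub_one hd hτ]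
  field_simp

lemma Mu_pow {u : Vec d} (hu : ‖u‖ = 1) {τ : ℝ} (hτ : 0 < τ) (n : ℕ) :
    Mu u (τ ^ n) = Mu u τ ^ n := by
  induction n with
  | zero => simp [Mu_one]
  | succ n ih => rw [pow_succ, pow_succ, ← ih, Mu_mul hu (pow_pos hτ n) hτ]

lemma matAct_Mu (u : Vec d) (τ : ℝ) (v : Vec d) :
    matAct (Mu u τ) v = sig d τ • v + ((τ - sig d τ) * (inner ℝ u v : ℝ)) • u := by
  ext i
  have h : matAct (Mu u τ) v i = (Mu u τ).mulVec (fun j => v j) i := rfl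
  rw [h]
  simp only [Mu, Matrix.add_mulVec, Matrix.smul_mulVec, Matrix.one_mulVec,
    vecMulVec_mulVec, Pi.add_apply, Pi.smul_apply, smul_eq_mul]
  have hdot : ((fun i => u i) ⬝ᵥ (fun j => v j)) = (inner ℝ u v : ℝ) := (inner_eq_dot u v).symm
  rw [hdot]
  have hr : (sig d τ • v + ((τ - sig d τ) * (inner ℝ u v : ℝ)) • u) i
      = sig d τ * v i + ((τ - sig d τ) * (inner ℝ u v : ℝ)) * u i := rfl
  rw [hr]
  ring

lemma inner_matAct_Mu {u : Vec d} (hu : ‖u‖ = 1) (τ : ℝ) (v : Vec d) :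
    (inner ℝ u (matAct (Mu u τ) v) : ℝ) = τ * (inner ℝ u v : ℝ) := by
  rw [matAct_Mu]
  rw [inner_add_right, real_inner_smul_right, real_inner_smul_right,
    real_inner_self_eq_norm_sq, hu]
  ring

lemma norm_sq_matAct_Mu {u : Vec d} (hu : ‖u‖ = 1) (τ : ℝ) (v : Vec d) :
    ‖matAct (Mu u τ) v‖ ^ 2 = (sig d τ)^2 * ‖v‖^2
      + (τ^2 - (sig d τ)^2) * (inner ℝ u v : ℝ)^2 := by
  rw [matAct_Mu, norm_add_sq_real]
  rw [real_inner_smul_left, real_inner_smul_right, norm_smul, norm_smul]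
  simp only [Real.norm_eq_abs, mul_pow, sq_abs, hu, real_inner_comm v u]
  ring

end S9
noncomputable section S9d
namespace S9

variable {d : ℕ}

def pf (u : Vec d) : Proj d → ℝ :=
  Quotient.lift (fun v : {v : Vec d // v ≠ 0} => (inner ℝ u (v : Vec d) : ℝ)^2 / ‖(v : Vec d)‖^2)
    (by
      rintro a b ⟨c, hc, h⟩
      simp only [h, real_inner_smul_right, norm_smul, mul_pow, sq_abs, Real.norm_eq_abs]
      rw [mul_div_mul_left _ _ (pow_ne_zero 2 hc)])

lemma pf_mk (u : Vec d) (v : {v : Vec d // v ≠ 0}) :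
    pf u (Quotient.mk (projSetoid d) v) = (inner ℝ u (v : Vec d) : ℝ)^2 / ‖(v : Vec d)‖^2 := rfl

lemma continuous_pf (u : Vec d) : Continuous (pf u) := by
  apply Continuous.quotient_lift
  apply Continuous.div
  · exact (Continuous.inner continuous_const continuous_subtype_val).pow 2
  · exact (continuous_subtype_val.norm).pow 2
  · intro v
    exact pow_ne_zero 2 (norm_ne_zero_iff.mpr v.2)

lemma measurable_pf (u : Vec d) : Measurable (pf u) := (continuous_pf u).measurable

lemma pf_le_one {u : Vec d} (hu : ‖u‖ = 1) (x : Proj d) : pf u x ≤ 1 := by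
  induction x using Quotient.ind with
  | _ v =>
    rw [pf_mk]
    have hv : 0 < ‖(v : Vec d)‖ := norm_pos_iff.mpr v.2
    rw [div_le_one (by positivity)]
    have h1 : |(inner ℝ u (v : Vec d) : ℝ)| ≤ ‖u‖ * ‖(v : Vec d)‖ := abs_real_inner_le_norm _ _
    rw [hu, one_mul] at h1
    calc (inner ℝ u (v : Vec d) : ℝ)^2 = |(inner ℝ u (v : Vec d) : ℝ)|^2 := (sq_abs _).symm
      _ ≤ ‖(v : Vec d)‖^2 := pow_le_pow_left₀ (abs_nonneg _) h1 2

lemma pf_ne_zero_iff (u : Vec d) (v : {v : Vec d // v ≠ 0}) :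
    pf u (Quotient.mk (projSetoid d) v) ≠ 0 ↔ (inner ℝ u (v : Vec d) : ℝ) ≠ 0 := by
  rw [pf_mk]
  have hv : ‖(v : Vec d)‖ ≠ 0 := norm_ne_zero_iff.mpr v.2
  constructor
  · intro h hinner
    exact h (by simp [hinner])
  · intro h
    exact div_ne_zero (pow_ne_zero 2 h) (pow_ne_zero 2 hv)

lemma unit_ne_zero {u : Vec d} (hu : ‖u‖ = 1) : u ≠ 0 := by
  intro h
  rw [h, norm_zero] at hu
  exact one_ne_zero hu.symm

lemma pf_eq_one_iff {u : Vec d} (hu : ‖u‖ = 1) (v : {v : Vec d // v ≠ 0}) :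
    pf u (Quotient.mk (projSetoid d) v) = 1 ↔
      Quotient.mk (projSetoid d) v = Quotient.mk (projSetoid d) ⟨u, unit_ne_zero hu⟩ := by
  set α : ℝ := inner ℝ u (v : Vec d) with hα
  have hv : 0 < ‖(v : Vec d)‖ := norm_pos_iff.mpr v.2
  constructor
  · intro h
    rw [pf_mk, div_eq_one_iff_eq (by positivity)] at h
    have hsub : ‖(v : Vec d) - α • u‖^2 = 0 := by
      rw [norm_sub_sq_real, real_inner_smul_right, norm_smul, real_inner_comm]
      simp only [Real.norm_eq_abs, mul_pow, sq_abs, hu, one_pow, mul_one]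
      rw [← hα] at *
      nlinarith [h]
    have hveq : (v : Vec d) = α • u := by
      have h0 := pow_eq_zero_iff (n := 2) (by norm_num) |>.mp hsub
      rw [norm_eq_zero] at h0
      exact sub_eq_zero.mp h0
    have hα0 : α ≠ 0 := by
      intro h0
      apply v.2
      rw [hveq, h0, zero_smul]
    exact Quotient.sound ⟨α⁻¹, inv_ne_zero hα0,
      by rw [hveq, smul_smul, inv_mul_cancel₀ hα0, one_smul]⟩
  · intro h
    have hrel := Quotient.exact h
    obtain ⟨c, hc, hcu⟩ := hrel
    have hcv : u = c • (v : Vec d) := hcu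
    have habs : |c| * ‖(v : Vec d)‖ = 1 := by rw [← Real.norm_eq_abs, ← norm_smul, ← hcv, hu]
    have h2 : (inner ℝ u (v : Vec d) : ℝ) = c * ‖(v : Vec d)‖^2 := by
      rw [hcv, real_inner_smul_left, real_inner_self_eq_norm_sq]
    have hc2 : c^2 * ‖(v : Vec d)‖^2 = 1 := by nlinarith [sq_abs c]
    rw [pf_mk, h2]
    rw [div_eq_one_iff_eq (by positivity)]
    nlinarith [hc2]

end S9
noncomputable section S9e
namespace S9
open Filter

variable {d : ℕ}

lemma sig_npow {τ : ℝ} (hτ : 0 < τ) (n : ℕ) : sig d (τ ^ n) = sig d τ ^ n := by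
  induction n with
  | zero => simpa using sig_one
  | succ n ih => rw [pow_succ, pow_succ, sig_mul (pow_pos hτ n) hτ, ih]

lemma keyA (hd : 2 ≤ d) {u : Vec d} (hu : ‖u‖ = 1) (ν : Measure (Proj d))
    [IsProbabilityMeasure ν]
    (hstab : ∀ τ : ℝ, 0 < τ → ν.map (projMap (Mu u τ)) = ν) :
    ν {x | pf u x ≠ 0} ≤ ν {x | pf u x = 1} := by
  have hmeas_pf := measurable_pf (d := d) u
  have step1 : ∀ c : ℝ, 0 < c → c < 1 → ν {x | pf u x ≠ 0} ≤ ν {x | c < pf u x} := by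
    intro c _hc0 hc1
    set B : ℕ → Matrix (Fin d) (Fin d) ℝ := fun n => Mu u ((2:ℝ)^(n+1)) with hB
    have hpos : ∀ n : ℕ, (0:ℝ) < 2^(n+1) := fun n => by positivity
    have hdet : ∀ n, (B n).det ≠ 0 := fun n => by
      rw [hB]; rw [det_Mu hd hu (hpos n)]; norm_num
    set U : Set (Proj d) := {x | c < pf u x} with hU
    have hUm : MeasurableSet U := measurableSet_lt measurable_const hmeas_pf
    have hpres : ∀ n, ν (projMap (B n) ⁻¹' U) = ν U := by
      intro n
      conv_rhs => rw [← hstab _ (hpos n)]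
      rw [Measure.map_apply (measurable_projMap (hdet n)) hUm]
    have hconv : ∀ x, pf u x ≠ 0 → ∀ᶠ n in atTop, projMap (B n) x ∈ U := by
      intro x hx
      induction x using Quotient.ind with
      | _ v =>
        have hα : (inner ℝ u (v : Vec d) : ℝ) ≠ 0 := (pf_ne_zero_iff u v).mp hx
        set α : ℝ := (inner ℝ u (v : Vec d) : ℝ) with hαdef
        set s2 : ℝ := sig d 2 with hs2def
        have hs2 : 0 < s2 := sig_pos (by norm_num)
        set r : ℝ := (s2 / 2)^2 with hr
        have hr0 : 0 ≤ r := sq_nonneg _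
        have hr1 : r < 1 := by
          have h1 : s2 < 1 := sig_lt_one hd (by norm_num)
          nlinarith
        have hval : ∀ n : ℕ, pf u (projMap (B n) (Quotient.mk (projSetoid d) v))
            = α^2 / (r^(n+1) * ‖(v : Vec d)‖^2 + (1 - r^(n+1)) * α^2) := by
          intro n
          rw [projMap_mk (hdet n), pf_mk]
          simp only [hB]
          rw [inner_matAct_Mu hu, norm_sq_matAct_Mu hu]
          set τ : ℝ := (2:ℝ)^(n+1) with hτdef
          set σ : ℝ := sig d τ with hσdef
          have hτ0 : (0:ℝ) < τ := hpos n
          have hστ : σ = s2 ^ (n+1) := by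
            rw [hσdef, hτdef, sig_npow (by norm_num)]
          have hrq : r^(n+1) = (σ/τ)^2 := by
            calc r^(n+1) = ((s2/2)^(n+1))^2 := by
                  rw [hr, ← pow_mul, ← pow_mul, mul_comm]
              _ = (σ/τ)^2 := by rw [hστ, hτdef, div_pow]
          have hq : τ^2 * r^(n+1) = σ^2 := by
            rw [hrq]
            field_simp
          have hden : σ^2*‖(v : Vec d)‖^2 + (τ^2-σ^2)*α^2
              = τ^2 * (r^(n+1) * ‖(v : Vec d)‖^2 + (1 - r^(n+1)) * α^2) := by
            rw [← hq]; ring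
          rw [← hαdef, hden, mul_pow, mul_div_mul_left _ _ (by positivity : τ^2 ≠ 0)]
        have htend : Tendsto (fun n : ℕ => pf u (projMap (B n) (Quotient.mk (projSetoid d) v)))
            atTop (nhds 1) := by
          have hq0 : Tendsto (fun n : ℕ => r^(n+1)) atTop (nhds 0) :=
            (tendsto_pow_atTop_nhds_zero_of_lt_one hr0 hr1).comp (tendsto_add_atTop_nat 1)
          have hden : Tendsto (fun n : ℕ => r^(n+1) * ‖(v : Vec d)‖^2 + (1 - r^(n+1)) * α^2)
              atTop (nhds (α^2)) := by
            have h := (hq0.mul_const (‖(v : Vec d)‖^2)).add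
              (((tendsto_const_nhds (x := (1:ℝ))).sub hq0).mul_const (α^2))
            simpa using h
          have hdiv := Filter.Tendsto.div (tendsto_const_nhds (x := α^2)) hden
            (by positivity : α^2 ≠ 0)
          rw [div_self (by positivity : α^2 ≠ 0)] at hdiv
          simp only [hval]
          exact hdiv
        exact htend.eventually (eventually_gt_nhds hc1)
    have hsub : {x | pf u x ≠ 0} ⊆ ⋃ N : ℕ, ⋂ n : ℕ, ⋂ (_ : N ≤ n), projMap (B n) ⁻¹' U := by
      intro x hx
      obtain ⟨N, hN⟩ := Filter.eventually_atTop.mp (hconv x hx)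
      exact Set.mem_iUnion.mpr ⟨N, Set.mem_iInter.mpr fun n => Set.mem_iInter.mpr fun hn =>
        hN n hn⟩
    refine le_trans (measure_mono hsub) ?_
    have hmono : Monotone (fun N : ℕ => ⋂ n : ℕ, ⋂ (_ : N ≤ n), projMap (B n) ⁻¹' U) := by
      intro a b hab x hx
      simp only [Set.mem_iInter] at *
      intro n hn
      exact hx n (le_trans hab hn)
    rw [hmono.measure_iUnion]
    apply iSup_le
    intro N
    refine le_trans (measure_mono ?_) (le_of_eq (hpres N))
    intro x hx
    simp only [Set.mem_iInter] at hx
    exact hx N le_rfl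
  -- Step 2
  have hSeq : {x | pf u x = 1} = ⋂ k : ℕ, {x | 1 - 1/(k+2 : ℝ) < pf u x} := by
    ext x
    simp only [Set.mem_setOf_eq, Set.mem_iInter]
    constructor
    · intro h k
      rw [h]
      have : (0:ℝ) < 1/(k+2 : ℝ) := by positivity
      linarith
    · intro h
      by_contra hne
      have hlt : pf u x < 1 := lt_of_le_of_ne (pf_le_one hu x) hne
      obtain ⟨n, hn⟩ := exists_nat_one_div_lt (by linarith : (0:ℝ) < 1 - pf u x)
      have h2 := h n
      have h3 : (1:ℝ)/(n+2 : ℝ) ≤ 1/(n+1 : ℝ) := by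
        apply one_div_le_one_div_of_le
        · positivity
        · push_cast; linarith
      linarith
  rw [hSeq]
  have hanti : Antitone (fun k : ℕ => {x | 1 - 1/(k+2 : ℝ) < pf u x}) := by
    intro a b hab x hx
    simp only [Set.mem_setOf_eq] at *
    have h3 : (1:ℝ)/(b+2 : ℝ) ≤ 1/(a+2 : ℝ) := by
      apply one_div_le_one_div_of_le
      · positivity
      · push_cast
        have : (a:ℝ) ≤ b := by exact_mod_cast hab
        linarith
    linarith
  rw [hanti.measure_iInter
    (fun k => (measurableSet_lt measurable_const hmeas_pf).nullMeasurableSet)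
    ⟨0, measure_ne_top ν _⟩]
  apply le_iInf
  intro k
  apply step1
  · have h4 : (1:ℝ)/(k+2 : ℝ) ≤ 1/2 := by
      apply one_div_le_one_div_of_le
      · norm_num
      · push_cast; linarith [Nat.cast_nonneg (α := ℝ) k]
    linarith
  · have : (0:ℝ) < 1/(k+2 : ℝ) := by positivity
    linarith

end S9
noncomputable section S9f
namespace S9
open Filter Matrix

variable {d : ℕ}

lemma det_Mu_ne (hd : 2 ≤ d) {u : Vec d} (hu : ‖u‖ = 1) {τ : ℝ} (hτ : 0 < τ) :
    (Mu u τ).det ≠ 0 := by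
  rw [det_Mu hd hu hτ]; norm_num

lemma Mu_apply (u : Vec d) (τ : ℝ) (i j : Fin d) :
    Mu u τ i j = sig d τ * (if i = j then 1 else 0) + (τ - sig d τ) * (u i * u j) := by
  simp only [Mu, Matrix.add_apply, Matrix.smul_apply, Matrix.vecMulVec_apply,
    Matrix.one_apply, smul_eq_mul]

lemma continuousAt_Mu (u : Vec d) : ContinuousAt (Mu u) 1 := by
  have hsig : ContinuousAt (sig d) 1 :=
    Real.continuousAt_rpow_const 1 _ (Or.inl one_ne_zero)
  apply continuousAt_pi.mpr
  intro i
  apply continuousAt_pi.mpr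
  intro j
  have : (fun τ : ℝ => Mu u τ i j)
      = fun τ : ℝ => sig d τ * (if i = j then 1 else 0) + (τ - sig d τ) * (u i * u j) := by
    funext τ; exact Mu_apply u τ i j
  rw [this]
  exact (hsig.mul continuousAt_const).add ((continuousAt_id.sub hsig).mul continuousAt_const)

lemma frontend (hd : 2 ≤ d) (ν ν' : Measure (Proj d)) [IsProbabilityMeasure ν]
    (A : {M : Matrix (Fin d) (Fin d) ℝ // M.det = 1})
    (hA : A ∈ interior {A : {M : Matrix (Fin d) (Fin d) ℝ // M.det = 1} |
      ν.map (projMap (A : Matrix (Fin d) (Fin d) ℝ)) = ν'})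
    {u : Vec d} (hu : ‖u‖ = 1) :
    ∀ τ : ℝ, 0 < τ → ν.map (projMap (Mu u τ)) = ν := by
  set S := {A : {M : Matrix (Fin d) (Fin d) ℝ // M.det = 1} |
      ν.map (projMap (A : Matrix (Fin d) (Fin d) ℝ)) = ν'} with hSdef
  have hAS : ν.map (projMap (A : Matrix (Fin d) (Fin d) ℝ)) = ν' := by
    have h : A ∈ S := interior_subset hA
    exact h
  have hdetA : (A : Matrix (Fin d) (Fin d) ℝ).det ≠ 0 := by rw [A.2]; norm_num
  obtain ⟨V, hVopen, hVeq⟩ := isOpen_induced_iff.mp (isOpen_interior (s := S))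
  have hAV : (A : Matrix (Fin d) (Fin d) ℝ) ∈ V := by
    have : A ∈ Subtype.val ⁻¹' V := by rw [hVeq]; exact hA
    exact this
  have hcont : ContinuousAt (fun τ : ℝ => (A : Matrix (Fin d) (Fin d) ℝ) * Mu u τ) 1 := by
    have hmul : Continuous fun M : Matrix (Fin d) (Fin d) ℝ =>
        (A : Matrix (Fin d) (Fin d) ℝ) * M := continuous_const.matrix_mul continuous_id
    exact (hmul.continuousAt).comp (continuousAt_Mu u)
  have hA1 : (A : Matrix (Fin d) (Fin d) ℝ) * Mu u 1 = (A : Matrix (Fin d) (Fin d) ℝ) := by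
    rw [Mu_one, Matrix.mul_one]
  have hev : ∀ᶠ τ in nhds (1:ℝ), (A : Matrix (Fin d) (Fin d) ℝ) * Mu u τ ∈ V :=
    hcont.eventually_mem (by rw [hA1]; exact hVopen.mem_nhds hAV)
  have hP : ∀ᶠ τ in nhdsWithin (1:ℝ) (Set.Ioi 0), ν.map (projMap (Mu u τ)) = ν := by
    filter_upwards [nhdsWithin_le_nhds hev, self_mem_nhdsWithin] with τ hτV hτpos
    have hMudet : (Mu u τ).det = 1 := det_Mu hd hu hτpos
    have hprod : ((A : Matrix (Fin d) (Fin d) ℝ) * Mu u τ).det = 1 := by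
      rw [Matrix.det_mul, A.2, hMudet, one_mul]
    have hmem : (⟨(A : Matrix (Fin d) (Fin d) ℝ) * Mu u τ, hprod⟩ :
        {M : Matrix (Fin d) (Fin d) ℝ // M.det = 1}) ∈ interior S := by
      rw [← hVeq]; exact hτV
    have hmemS : ν.map (projMap ((A : Matrix (Fin d) (Fin d) ℝ) * Mu u τ)) = ν' := by
      have h : (⟨(A : Matrix (Fin d) (Fin d) ℝ) * Mu u τ, hprod⟩ :
          {M : Matrix (Fin d) (Fin d) ℝ // M.det = 1}) ∈ S := interior_subset hmem
      exact h
    exact cancel_left hdetA (by rw [hMudet]; norm_num) hmemS hAS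
  intro τ hτ
  set t : ℕ → ℝ := fun n => τ ^ ((((n:ℕ):ℝ)+1)⁻¹) with ht
  have htpos : ∀ n, 0 < t n := fun n => Real.rpow_pos_of_pos hτ _
  have htend : Tendsto t atTop (nhdsWithin (1:ℝ) (Set.Ioi 0)) := by
    rw [tendsto_nhdsWithin_iff]
    constructor
    · have h0 : Tendsto (fun n : ℕ => (((n:ℕ):ℝ)+1)⁻¹) atTop (nhds 0) := by
        simpa [one_div] using tendsto_one_div_add_atTop_nhds_zero_nat (𝕜 := ℝ)
      have hc : ContinuousAt (fun y : ℝ => τ ^ y) 0 := Real.continuousAt_const_rpow hτ.ne'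
      have h2 := hc.tendsto.comp h0
      rw [Real.rpow_zero] at h2
      exact h2
    · exact Filter.Eventually.of_forall fun n => htpos n
  obtain ⟨n, hPn⟩ := (htend.eventually hP).exists
  have hiter : ∀ m : ℕ, ν.map (projMap (Mu u (t n ^ m))) = ν := by
    intro m
    induction m with
    | zero => rw [pow_zero, Mu_one, projMap_one, Measure.map_id]
    | succ m ih =>
      rw [pow_succ, ← Mu_mul hu (pow_pos (htpos n) m) (htpos n)]
      exact stab_mul (det_Mu_ne hd hu (pow_pos (htpos n) m)) (det_Mu_ne hd hu (htpos n)) ih hPn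
  have hroot : t n ^ (n+1) = τ := by
    rw [ht]
    have h1 : (((n:ℕ):ℝ)+1) ≠ 0 := by positivity
    rw [← Real.rpow_natCast (τ ^ ((((n:ℕ):ℝ)+1)⁻¹)) (n+1), ← Real.rpow_mul hτ.le]
    push_cast
    rw [inv_mul_cancel₀ h1, Real.rpow_one]
  rw [← hroot]
  exact hiter (n+1)

end S9
noncomputable section S9g
namespace S9
open Matrix

variable {d : ℕ}

def pvec (d : ℕ) (θ : ℝ) : Vec d :=
  (WithLp.equiv 2 (Fin d → ℝ)).symm (fun i => θ ^ (i : ℕ))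

lemma pvec_apply (θ : ℝ) (i : Fin d) : pvec d θ i = θ ^ (i : ℕ) := rfl

lemma pvec_ne_zero (hd : 2 ≤ d) (θ : ℝ) : pvec d θ ≠ 0 := by
  intro h
  have h0 : pvec d θ ⟨0, by omega⟩ = 0 := by rw [h]; rfl
  rw [pvec_apply] at h0
  simpa using h0

def nvec (d : ℕ) (θ : ℝ) : Vec d := ‖pvec d θ‖⁻¹ • pvec d θ

lemma nvec_norm (hd : 2 ≤ d) (θ : ℝ) : ‖nvec d θ‖ = 1 := by
  have := norm_smul_inv_norm (𝕜 := ℝ) (pvec_ne_zero hd θ)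
  simpa [nvec] using this

lemma pvec_eq_of_smul (hd : 2 ≤ d) {θ₁ θ₂ : ℝ} {c : ℝ}
    (h : pvec d θ₂ = c • pvec d θ₁) : θ₂ = θ₁ := by
  have h0 : pvec d θ₂ ⟨0, by omega⟩ = c * pvec d θ₁ ⟨0, by omega⟩ := by
    rw [h]; rfl
  have h1 : pvec d θ₂ ⟨1, by omega⟩ = c * pvec d θ₁ ⟨1, by omega⟩ := by
    rw [h]; rfl
  rw [pvec_apply, pvec_apply] at h0 h1
  simp only [pow_zero, pow_one] at h0 h1
  rw [mul_one] at h0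
  rw [h1, ← h0, one_mul]

lemma nvec_smul_of_quot_eq (hd : 2 ≤ d) {θ₁ θ₂ : ℝ}
    (h : (Quotient.mk (projSetoid d) ⟨nvec d θ₁, unit_ne_zero (nvec_norm hd θ₁)⟩ : Proj d)
       = Quotient.mk (projSetoid d) ⟨nvec d θ₂, unit_ne_zero (nvec_norm hd θ₂)⟩) :
    θ₂ = θ₁ := by
  obtain ⟨c, hc, hcs⟩ := Quotient.exact h
  -- hcs : nvec d θ₂ = c • nvec d θ₁
  have hn1 : ‖pvec d θ₁‖ ≠ 0 := norm_ne_zero_iff.mpr (pvec_ne_zero hd θ₁)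
  have hn2 : ‖pvec d θ₂‖ ≠ 0 := norm_ne_zero_iff.mpr (pvec_ne_zero hd θ₂)
  have hcs' : nvec d θ₂ = c • nvec d θ₁ := hcs
  have hp : pvec d θ₂ = (‖pvec d θ₂‖ * (c * ‖pvec d θ₁‖⁻¹)) • pvec d θ₁ := by
    calc pvec d θ₂ = ‖pvec d θ₂‖ • nvec d θ₂ := by
          rw [nvec, smul_smul, mul_inv_cancel₀ hn2, one_smul]
      _ = ‖pvec d θ₂‖ • (c • nvec d θ₁) := by rw [hcs']
      _ = (‖pvec d θ₂‖ * (c * ‖pvec d θ₁‖⁻¹)) • pvec d θ₁ := by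
          rw [nvec, smul_smul, smul_smul, mul_assoc]
  exact pvec_eq_of_smul hd hp

/-- The atom-candidate singletons. -/
def As (d : ℕ) (θ : ℝ) : Set (Proj d) := {x | pf (nvec d θ) x = 1}

lemma As_meas (θ : ℝ) : MeasurableSet (As d θ) :=
  measurableSet_eq_fun (measurable_pf _) measurable_const

lemma As_disj (hd : 2 ≤ d) : Pairwise (Function.onFun Disjoint (As d)) := by
  intro θ₁ θ₂ hne
  rw [Function.onFun, Set.disjoint_left]
  intro x h1 h2
  induction x using Quotient.ind with
  | _ v =>
    rw [As, Set.mem_setOf_eq, pf_eq_one_iff (nvec_norm hd θ₁) v] at h1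
    rw [As, Set.mem_setOf_eq, pf_eq_one_iff (nvec_norm hd θ₂) v] at h2
    exact hne (nvec_smul_of_quot_eq hd (h1 ▸ h2)).symm

end S9


/-- Empty interior of the transporter set of projective measures: for `d ≥ 2` and Borel
probability measures `ν, ν′` on `P^{d−1}`, the set `{A ∈ SL_d(ℝ) : A_*ν = ν′}` has empty
interior in `SL_d(ℝ)` (with the subspace topology from the space of `d × d` matrices). -/
theorem stmt9 {d : ℕ} (hd : 2 ≤ d)
    (ν ν' : MeasureTheory.Measure (Proj d))
    [MeasureTheory.IsProbabilityMeasure ν] [MeasureTheory.IsProbabilityMeasure ν'] :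
    interior {A : {M : Matrix (Fin d) (Fin d) ℝ // M.det = 1} |
      ν.map (projMap (A : Matrix (Fin d) (Fin d) ℝ)) = ν'} = ∅ := by
  by_contra hne
  obtain ⟨A, hA⟩ : ∃ A, A ∈ interior {A : {M : Matrix (Fin d) (Fin d) ℝ // M.det = 1} |
      ν.map (projMap (A : Matrix (Fin d) (Fin d) ℝ)) = ν'} := by
    rcases Set.eq_empty_or_nonempty (interior {A : {M : Matrix (Fin d) (Fin d) ℝ // M.det = 1} |
      ν.map (projMap (A : Matrix (Fin d) (Fin d) ℝ)) = ν'}) with h | h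
    · exact absurd h hne
    · exact h
  have hcnt : Set.Countable {θ : ℝ | 0 < ν (S9.As d θ)} :=
    MeasureTheory.Measure.countable_meas_pos_of_disjoint_iUnion
      (fun θ => S9.As_meas θ) (S9.As_disj hd)
  have hGinf : Set.Infinite {θ : ℝ | ν (S9.As d θ) = 0} := by
    by_contra hfin
    rw [Set.not_infinite] at hfin
    apply Cardinal.not_countable_real
    have hsub : (Set.univ : Set ℝ) ⊆ {θ | 0 < ν (S9.As d θ)} ∪ {θ | ν (S9.As d θ) = 0} := by
      intro θ _
      rcases eq_or_ne (ν (S9.As d θ)) 0 with h | h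
      · exact Or.inr h
      · exact Or.inl (pos_iff_ne_zero.mpr h)
    exact Set.Countable.mono hsub (hcnt.union hfin.countable)
  obtain ⟨T, hTsub, hTcard⟩ := hGinf.exists_subset_card_eq d
  set e := T.equivFinOfCardEq hTcard with he
  set θs : Fin d → ℝ := fun i => (e.symm i : ℝ) with hθs
  have hθinj : Function.Injective θs := by
    intro i j hij
    exact e.symm.injective (Subtype.ext hij)
  have hθgood : ∀ i, ν (S9.As d (θs i)) = 0 := by
    intro i
    exact hTsub (Finset.mem_coe.mpr (e.symm i).2)
  have hnull : ∀ i, ν {x | S9.pf (S9.nvec d (θs i)) x ≠ 0} = 0 := by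
    intro i
    have hu := S9.nvec_norm (d := d) hd (θs i)
    have hstab := S9.frontend hd ν ν' A hA hu
    have hkey := S9.keyA hd hu ν hstab
    exact le_antisymm (le_trans hkey (le_of_eq (hθgood i))) bot_le
  have hcover : (Set.univ : Set (Proj d)) ⊆
      ⋃ i : Fin d, {x | S9.pf (S9.nvec d (θs i)) x ≠ 0} := by
    intro x _
    induction x using Quotient.ind with
    | _ v =>
      have hex : ∃ i, (inner ℝ (S9.nvec d (θs i)) (v : Vec d) : ℝ) ≠ 0 := by
        by_contra hall
        push_neg at hall
        have hp : ∀ i, (inner ℝ (S9.pvec d (θs i)) (v : Vec d) : ℝ) = 0 := by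
          intro i
          have h := hall i
          rw [S9.nvec, real_inner_smul_left] at h
          have hn : (‖S9.pvec d (θs i)‖⁻¹ : ℝ) ≠ 0 :=
            inv_ne_zero (norm_ne_zero_iff.mpr (S9.pvec_ne_zero hd (θs i)))
          exact (mul_eq_zero.mp h).resolve_left hn
        have hdet : (Matrix.vandermonde θs).det ≠ 0 :=
          Matrix.det_vandermonde_ne_zero_iff.mpr hθinj
        have hmv : (Matrix.vandermonde θs).mulVec (fun j => (v : Vec d) j) = 0 := by
          funext i
          have h2 := hp i
          rw [S9.inner_eq_dot] at h2
          simpa [Matrix.mulVec, Matrix.vandermonde, dotProduct,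
            S9.pvec_apply] using h2
        have hv0 := Matrix.eq_zero_of_mulVec_eq_zero hdet hmv
        apply v.2
        ext j
        exact congrFun hv0 j
      obtain ⟨i, hi⟩ := hex
      exact Set.mem_iUnion.mpr ⟨i, (S9.pf_ne_zero_iff _ v).mpr hi⟩
  have h1 : (1 : ENNReal) ≤ 0 := by
    calc (1 : ENNReal) = ν Set.univ := (measure_univ).symm
      _ ≤ ν (⋃ i : Fin d, {x | S9.pf (S9.nvec d (θs i)) x ≠ 0}) := measure_mono hcover
      _ ≤ ∑ i : Fin d, ν {x | S9.pf (S9.nvec d (θs i)) x ≠ 0} :=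
          measure_iUnion_fintype_le _ _
      _ = 0 := by simp [hnull]
  simp at h1
end S9g
end S9f
end S9e
end S9d
end S9c
end S9b
end S9
end
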